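/- arXiv:1904.05936 — 5 statements merged into one kernel-verified Lean document; each statement's English description precedes it below -/
import Mathlib

section
/- Let Γ be a finite simple graph whose vertex set is partitioned into classes X_1, …, X_m, Y such that (i) for all 1 ≤ i, j ≤ m, every vertex x ∈ X_i has the same number of neighbors in X_j (a number depending only on i and j), and (ii) for each 1 ≤ i ≤ m, every vertex y ∈ Y has either 0, |X_i|/2, or |X_i| neighbors in X_i. Let Γ' be the graph obtained from Γ as follows: for each 1 ≤ i ≤ m and each vertex y ∈ Y having exactly |X_i|/2 neighbors in X_i, delete the |X_i|/2 edges between y and X_i and insert the |X_i|/2 edges between y and the vertices of X_i not previously adjacent to y. Then Γ' is cospectral with Γ with respect to the adjacency matrix. -/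
open scoped Classical

/-- Two finite graphs are cospectral (w.r.t. the adjacency matrix) if their adjacency
matrices have the same characteristic polynomial. -/
noncomputable def Cospectral {V W : Type*} [Fintype V] [DecidableEq V] [Fintype W]
    [DecidableEq W] (G : SimpleGraph V) (H : SimpleGraph W) : Prop :=
  (G.adjMatrix ℤ).charpoly = (H.adjMatrix ℤ).charpoly

open Finset Polynomial in
private lemma charpoly_conj_self {n : Type*} [Fintype n] [DecidableEq n] {R : Type*} [CommRing R]
    (Q A : Matrix n n R) (hQ : Q * Q = 1) : (Q * A * Q).charpoly = A.charpoly := by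
  have hQc : (C.mapMatrix Q : Matrix n n R[X]) * C.mapMatrix Q = 1 := by
    rw [← map_mul, hQ, map_one]
  have hcomm : ∀ M : Matrix n n R[X],
      M * Matrix.scalar n (X : R[X]) = Matrix.scalar n (X : R[X]) * M := fun M =>
    (Matrix.scalar_commute (X : R[X]) (fun r => Commute.all _ _) M).symm
  have hc : Matrix.charmatrix (Q * A * Q) =
      C.mapMatrix Q * Matrix.charmatrix A * C.mapMatrix Q := by
    rw [Matrix.charmatrix, Matrix.charmatrix, Matrix.mul_sub, Matrix.sub_mul]
    congr 1
    · rw [hcomm, mul_assoc, hQc, mul_one]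
    · rw [map_mul, map_mul]
  have hdet : (C.mapMatrix Q : Matrix n n R[X]).det * (C.mapMatrix Q : Matrix n n R[X]).det = 1 := by
    rw [← Matrix.det_mul, hQc, Matrix.det_one]
  rw [Matrix.charpoly, Matrix.charpoly, hc, Matrix.det_mul, Matrix.det_mul]
  linear_combination (Matrix.charmatrix A).det * hdet

/-- Godsil–McKay switching, general form.
Let the vertex set of `Γ` be partitioned into classes `X 1, …, X m, Y` such that
(i) for all `i j`, every vertex of `X i` has the same number of neighbors in `X j`, and
(ii) every `y ∈ Y` has `0`, `|X i|/2` or `|X i|` neighbors in each `X i`.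
If `Γ'` is obtained from `Γ` by switching the `Y`–`X i` adjacencies of every `y ∈ Y`
having exactly half of `X i` as neighbors (and leaving all other adjacencies unchanged),
then `Γ'` is cospectral with `Γ`. -/
theorem stmt0 {V : Type*} [Fintype V] [DecidableEq V] (m : ℕ)
    (Γ Γ' : SimpleGraph V) (X : Fin m → Set V) (Y : Set V)
    (hY : Y = (⋃ i, X i)ᶜ)
    (hdisj : ∀ i j : Fin m, i ≠ j → Disjoint (X i) (X j))
    (hreg : ∀ i j : Fin m, ∃ d : ℕ, ∀ x ∈ X i, (Γ.neighborSet x ∩ X j).ncard = d)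
    (hhalf : ∀ i : Fin m, ∀ y ∈ Y,
      (Γ.neighborSet y ∩ X i).ncard = 0 ∨
        2 * (Γ.neighborSet y ∩ X i).ncard = (X i).ncard ∨
        (Γ.neighborSet y ∩ X i).ncard = (X i).ncard)
    (hswitch : ∀ i : Fin m, ∀ y ∈ Y, ∀ x ∈ X i,
      (2 * (Γ.neighborSet y ∩ X i).ncard = (X i).ncard →
        (Γ'.Adj y x ↔ ¬ Γ.Adj y x)) ∧
      (2 * (Γ.neighborSet y ∩ X i).ncard ≠ (X i).ncard →
        (Γ'.Adj y x ↔ Γ.Adj y x)))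
    (hsame : ∀ u v : V, ((u ∈ Y ∧ v ∈ Y) ∨ (∃ i j, u ∈ X i ∧ v ∈ X j)) →
      (Γ'.Adj u v ↔ Γ.Adj u v)) :
    Cospectral Γ Γ' := by
  classical
  set A : Matrix V V ℚ := Γ.adjMatrix ℚ with hA
  set A' : Matrix V V ℚ := Γ'.adjMatrix ℚ with hA'
  have huniq : ∀ {i j : Fin m} {v : V}, v ∈ X i → v ∈ X j → i = j := by
    intro i j v hi hj
    by_contra h
    exact Set.disjoint_left.1 (hdisj i j h) hi hj
  have hYiff : ∀ v : V, v ∈ Y ↔ ∀ i, v ∉ X i := by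
    intro v; rw [hY]; simp
  set n : Fin m → ℚ := fun i => ((X i).ncard : ℚ) with hn
  have hnne : ∀ {i : Fin m} {x : V}, x ∈ X i → n i ≠ 0 := by
    intro i x hx
    have h0 : 0 < (X i).ncard := (Set.ncard_pos (Set.toFinite _)).2 ⟨x, hx⟩
    simp only [hn, ne_eq, Nat.cast_eq_zero]
    omega
  have hcardn : ∀ i : Fin m, ((X i).toFinset.card : ℚ) = n i := by
    intro i; simp [hn, Set.ncard_eq_toFinset_card']
  -- the switching matrix
  set Q : Matrix V V ℚ := fun u v =>
    (∑ i : Fin m, if u ∈ X i ∧ v ∈ X i then 2 / n i else 0)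
      + (if u = v then (if ∃ i, u ∈ X i then (-1 : ℚ) else 1) else 0) with hQdef
  have hQrow : ∀ {i : Fin m} {u : V}, u ∈ X i → ∀ t : V,
      Q u t = (if t ∈ X i then 2 / n i else 0) - (if u = t then 1 else 0) := by
    intro i u hu t
    have hex : ∃ k, u ∈ X k := ⟨i, hu⟩
    by_cases ht : t ∈ X i
    · have hsum : (∑ k : Fin m, if u ∈ X k ∧ t ∈ X k then 2 / n k else 0) = 2 / n i := by
        rw [Finset.sum_eq_single i]
        · simp [hu, ht]
        · intro k _ hki
          have hk : ¬(u ∈ X k ∧ t ∈ X k) := fun h => hki (huniq h.1 hu)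
          simp [hk]
        · simp
      simp only [hQdef, hsum, hex, if_true, ht]
      by_cases htu : u = t <;> simp [htu] <;> ring
    · have hsum : (∑ k : Fin m, if u ∈ X k ∧ t ∈ X k then 2 / n k else 0) = 0 := by
        apply Finset.sum_eq_zero; intro k _
        have hk : ¬(u ∈ X k ∧ t ∈ X k) := fun h => ht ((huniq h.1 hu) ▸ h.2)
        simp [hk]
      have htu : ¬(u = t) := fun h => ht (h ▸ hu)
      simp [hQdef, hsum, ht, htu]
  have hQrowY : ∀ {u : V}, u ∈ Y → ∀ t : V, Q u t = if u = t then 1 else 0 := by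
    intro u hu t
    have hnx : ∀ k, u ∉ X k := (hYiff u).1 hu
    have hsum : (∑ k : Fin m, if u ∈ X k ∧ t ∈ X k then 2 / n k else 0) = 0 :=
      Finset.sum_eq_zero fun k _ => by simp [hnx k]
    have hex : ¬ ∃ k, u ∈ X k := by simpa using hnx
    simp [hQdef, hsum, hex]
  have hQsymm : ∀ u v : V, Q u v = Q v u := by
    intro u v
    by_cases huv : u = v
    · subst huv; rfl
    · have h1 : ¬ (v = u) := fun h => huv h.symm
      simp only [hQdef, huv, h1, if_false, add_zero]
      exact Finset.sum_congr rfl fun k _ => if_congr and_comm rfl rfl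
  -- row sums against arbitrary functions
  have hrowY : ∀ {u : V}, u ∈ Y → ∀ f : V → ℚ, ∑ t, Q u t * f t = f u := by
    intro u hu f
    have h1 : ∀ t, Q u t * f t = if u = t then f t else 0 := by
      intro t; rw [hQrowY hu t]; by_cases h : u = t <;> simp [h]
    rw [Finset.sum_congr rfl fun t _ => h1 t, Finset.sum_ite_eq]
    simp
  have hrowX : ∀ {i : Fin m} {u : V}, u ∈ X i → ∀ f : V → ℚ,
      ∑ t, Q u t * f t = (2 / n i) * (∑ t ∈ (X i).toFinset, f t) - f u := by
    intro i u hu f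
    have h1 : ∀ t, Q u t * f t =
        (if t ∈ (X i).toFinset then (2 / n i) * f t else 0) - (if u = t then f t else 0) := by
      intro t
      rw [hQrow hu t]
      by_cases ht : t ∈ X i
      · by_cases htu : u = t <;> simp [ht, htu, Set.mem_toFinset] <;> ring
      · have htu : ¬ (u = t) := fun h => ht (h ▸ hu)
        simp [ht, htu, Set.mem_toFinset]
    rw [Finset.sum_congr rfl fun t _ => h1 t, Finset.sum_sub_distrib]
    congr 1
    · rw [Finset.sum_ite_mem, Finset.univ_inter, Finset.mul_sum]
    · rw [Finset.sum_ite_eq]; simp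
  -- column versions
  have hcolY : ∀ {v : V}, v ∈ Y → ∀ f : V → ℚ, ∑ t, f t * Q t v = f v := by
    intro v hv f
    have : ∀ t, f t * Q t v = Q v t * f t := fun t => by rw [mul_comm, hQsymm]
    rw [Finset.sum_congr rfl fun t _ => this t]
    exact hrowY hv f
  have hcolX : ∀ {j : Fin m} {v : V}, v ∈ X j → ∀ f : V → ℚ,
      ∑ t, f t * Q t v = (2 / n j) * (∑ t ∈ (X j).toFinset, f t) - f v := by
    intro j v hv f
    have : ∀ t, f t * Q t v = Q v t * f t := fun t => by rw [mul_comm, hQsymm]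
    rw [Finset.sum_congr rfl fun t _ => this t]
    exact hrowX hv f
  -- Q is an involution
  have hQQ : Q * Q = 1 := by
    ext u v
    rw [Matrix.mul_apply]
    by_cases hu : u ∈ Y
    · rw [hrowY hu (fun t => Q t v), hQrowY hu v, Matrix.one_apply]
    · obtain ⟨i, hi⟩ : ∃ i, u ∈ X i := by
        by_contra h
        exact hu ((hYiff u).2 (by simpa using h))
      rw [hrowX hi (fun t => Q t v)]
      by_cases hv : v ∈ X i
      · have hsum : ∑ t ∈ (X i).toFinset, Q t v = 1 := by
          have h1 : ∀ t ∈ (X i).toFinset, Q t v =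
              (2 / n i) - (if t = v then 1 else 0) := by
            intro t ht
            rw [hQrow (Set.mem_toFinset.1 ht) v]
            simp [hv]
          rw [Finset.sum_congr rfl h1, Finset.sum_sub_distrib, Finset.sum_const,
            Finset.sum_ite_eq', if_pos (Set.mem_toFinset.2 hv), nsmul_eq_mul, hcardn i,
            mul_div_cancel₀ _ (hnne hi)]
          norm_num
        rw [hsum, hQrow hi v, Matrix.one_apply]
        by_cases huv : u = v <;> simp [hv, huv] <;> ring
      · have hsum : ∑ t ∈ (X i).toFinset, Q t v = 0 := by
          apply Finset.sum_eq_zero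
          intro t ht
          rw [hQrow (Set.mem_toFinset.1 ht) v]
          have : ¬ (t = v) := fun h => hv (h ▸ Set.mem_toFinset.1 ht)
          simp [hv, this]
        have huv : ¬ (u = v) := fun h => hv (h ▸ hi)
        rw [hsum, hQrow hi v, Matrix.one_apply, if_neg huv]
        simp [hv, huv]
  -- degree sums
  have degsum : ∀ (G : SimpleGraph V) (v : V) (i : Fin m),
      ∑ t ∈ (X i).toFinset, (G.adjMatrix ℚ) v t = ((G.neighborSet v ∩ X i).ncard : ℚ) := by
    intro G v i
    have hset : (G.neighborSet v ∩ X i).toFinset = (X i).toFinset.filter (fun t => G.Adj v t) := by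
      ext t; simp [and_comm]
    rw [Set.ncard_eq_toFinset_card', hset]
    simp [SimpleGraph.adjMatrix_apply, Finset.sum_boole]
  have hAsymm : ∀ (G : SimpleGraph V) (u v : V),
      (G.adjMatrix ℚ) u v = (G.adjMatrix ℚ) v u := by
    intro G u v; simp [SimpleGraph.adjMatrix_apply, SimpleGraph.adj_comm]
  -- the block lemma
  have hblock : ∀ (j : Fin m) (u : V), u ∈ Y → ∀ v, v ∈ X j →
      A' u v = (2 / n j) * (∑ t ∈ (X j).toFinset, A u t) - A u v := by
    intro j u hu v hv
    have hnj := hnne hv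
    have npos : 0 < (X j).ncard := (Set.ncard_pos (Set.toFinite _)).2 ⟨v, hv⟩
    have hS := degsum Γ u j
    rcases hhalf j u hu with h0 | hhalfc | hfull
    · have hempty : Γ.neighborSet u ∩ X j = ∅ := (Set.ncard_eq_zero (Set.toFinite _)).1 h0
      have hnadj : ¬ Γ.Adj u v := by
        intro hadj
        exact absurd (Set.eq_empty_iff_forall_notMem.1 hempty v) (by simp [hadj, hv])
      have hcond : 2 * (Γ.neighborSet u ∩ X j).ncard ≠ (X j).ncard := by
        rw [h0]; omega
      have hA'v : Γ'.Adj u v ↔ Γ.Adj u v := (hswitch j u hu v hv).2 hcond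
      have hsum0 : ∑ t ∈ (X j).toFinset, A u t = 0 := by rw [hA, hS, h0]; simp
      rw [hsum0]
      simp [hA, hA', SimpleGraph.adjMatrix_apply, hA'v, hnadj]
    · have h2 : (2:ℚ) * ((Γ.neighborSet u ∩ X j).ncard : ℚ) = n j := by
        have hc := congrArg (fun k : ℕ => (k : ℚ)) hhalfc
        push_cast at hc
        exact hc
      have hone : (2 / n j) * (∑ t ∈ (X j).toFinset, A u t) = 1 := by
        rw [hA, hS, div_mul_eq_mul_div, h2, div_self hnj]
      rw [hone]
      have hflip := (hswitch j u hu v hv).1 hhalfc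
      by_cases h : Γ.Adj u v <;>
        simp [hA, hA', SimpleGraph.adjMatrix_apply, hflip, h]
    · have heq : Γ.neighborSet u ∩ X j = X j :=
        Set.eq_of_subset_of_ncard_le Set.inter_subset_right (le_of_eq hfull.symm)
          (Set.toFinite _)
      have hadj : Γ.Adj u v := (heq.symm ▸ hv : v ∈ Γ.neighborSet u ∩ X j).1
      have hcond : 2 * (Γ.neighborSet u ∩ X j).ncard ≠ (X j).ncard := by
        rw [hfull]; omega
      have hA'v : Γ'.Adj u v ↔ Γ.Adj u v := (hswitch j u hu v hv).2 hcond
      have hsum : (2 / n j) * (∑ t ∈ (X j).toFinset, A u t) = 2 := by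
        rw [hA, hS, heq]
        show 2 / n j * n j = 2
        rw [div_mul_cancel₀ _ hnj]
      rw [hsum]
      have hadj' : Γ'.Adj u v := hA'v.2 hadj
      simp only [hA, hA', SimpleGraph.adjMatrix_apply, if_pos hadj, if_pos hadj']
      norm_num
  -- Γ' has the same X-degrees from Y as Γ
  have hS'eq : ∀ (j : Fin m) (u : V), u ∈ Y →
      ∑ t ∈ (X j).toFinset, A' u t = ∑ t ∈ (X j).toFinset, A u t := by
    intro j u hu
    rcases Finset.eq_empty_or_nonempty (X j).toFinset with he | hne
    · simp [he]
    · obtain ⟨x, hx⟩ := hne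
      have hxX := Set.mem_toFinset.1 hx
      have hnj := hnne hxX
      rw [Finset.sum_congr rfl (fun t ht => hblock j u hu t (Set.mem_toFinset.1 ht)),
        Finset.sum_sub_distrib, Finset.sum_const, nsmul_eq_mul, hcardn j]
      field_simp
      ring
  -- the key identity Q * A = A' * Q
  have hmain : Q * A = A' * Q := by
    ext u v
    rw [Matrix.mul_apply, Matrix.mul_apply]
    by_cases hu : u ∈ Y
    · rw [hrowY hu (fun t => A t v)]
      by_cases hv : v ∈ Y
      · rw [hcolY hv (fun t => A' u t)]
        have := hsame u v (Or.inl ⟨hu, hv⟩)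
        simp [hA, hA', SimpleGraph.adjMatrix_apply, this]
      · obtain ⟨j, hj⟩ : ∃ j, v ∈ X j := by
          by_contra h
          exact hv ((hYiff v).2 (by simpa using h))
        rw [hcolX hj (fun t => A' u t), hS'eq j u hu, hblock j u hu v hj]
        ring
    · obtain ⟨i, hi⟩ : ∃ i, u ∈ X i := by
        by_contra h
        exact hu ((hYiff u).2 (by simpa using h))
      rw [hrowX hi (fun t => A t v)]
      have hsAv : ∑ t ∈ (X i).toFinset, A t v = ∑ t ∈ (X i).toFinset, A v t :=
        Finset.sum_congr rfl fun t _ => hAsymm Γ t v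
      by_cases hv : v ∈ Y
      · rw [hcolY hv (fun t => A' u t), hsAv,
          show A u v = A v u from hAsymm Γ u v,
          show A' u v = A' v u from hAsymm Γ' u v,
          hblock i v hv u hi]
      · obtain ⟨j, hj⟩ : ∃ j, v ∈ X j := by
          by_contra h
          exact hv ((hYiff v).2 (by simpa using h))
        rw [hcolX hj (fun t => A' u t), hsAv]
        have hA'A : ∀ t ∈ (X j).toFinset, A' u t = A u t := by
          intro t ht
          have := hsame u t (Or.inr ⟨i, j, hi, Set.mem_toFinset.1 ht⟩)
          simp [hA, hA', SimpleGraph.adjMatrix_apply, this]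
        have hA'uv : A' u v = A u v := by
          have := hsame u v (Or.inr ⟨i, j, hi, hj⟩)
          simp [hA, hA', SimpleGraph.adjMatrix_apply, this]
        rw [Finset.sum_congr rfl hA'A, hA'uv]
        -- regularity counting
        obtain ⟨dij, hdij⟩ := hreg i j
        obtain ⟨dji, hdji⟩ := hreg j i
        have hSvi : ∑ t ∈ (X i).toFinset, A v t = (dji : ℚ) := by
          rw [hA, degsum Γ v i, hdji v hj]
        have hSuj : ∑ t ∈ (X j).toFinset, A u t = (dij : ℚ) := by
          rw [hA, degsum Γ u j, hdij u hi]
        have hcount : n i * (dij : ℚ) = n j * (dji : ℚ) := by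
          have h1 : ∑ x ∈ (X i).toFinset, ∑ t ∈ (X j).toFinset, A x t
              = ∑ t ∈ (X j).toFinset, ∑ x ∈ (X i).toFinset, A t x := by
            refine Finset.sum_comm.trans ?_
            exact Finset.sum_congr rfl fun t _ => Finset.sum_congr rfl fun x _ => hAsymm Γ x t
          have h2 : ∑ x ∈ (X i).toFinset, ∑ t ∈ (X j).toFinset, A x t = n i * (dij : ℚ) := by
            rw [Finset.sum_congr rfl
              (fun x hx => by rw [hA, degsum Γ x j, hdij x (Set.mem_toFinset.1 hx)]),
              Finset.sum_const, nsmul_eq_mul, hcardn i]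
          have h3 : ∑ t ∈ (X j).toFinset, ∑ x ∈ (X i).toFinset, A t x = n j * (dji : ℚ) := by
            rw [Finset.sum_congr rfl
              (fun t ht => by rw [hA, degsum Γ t i, hdji t (Set.mem_toFinset.1 ht)]),
              Finset.sum_const, nsmul_eq_mul, hcardn j]
          rw [← h2, h1, h3]
        rw [hSvi, hSuj]
        have hni := hnne hi
        have hnj := hnne hj
        have : (2 / n i) * (dji : ℚ) = (2 / n j) * (dij : ℚ) := by
          rw [div_mul_eq_mul_div, div_mul_eq_mul_div, div_eq_div_iff hni hnj]
          linear_combination (-2 : ℚ) * hcount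
        rw [this]
  -- conclude
  have hA'eq : A' = Q * A * Q := by
    calc A' = A' * (Q * Q) := by rw [hQQ, mul_one]
      _ = (A' * Q) * Q := by rw [mul_assoc]
      _ = (Q * A) * Q := by rw [hmain]
  have key : (Γ.adjMatrix ℚ).charpoly = (Γ'.adjMatrix ℚ).charpoly := by
    rw [← hA, ← hA', hA'eq, charpoly_conj_self Q A hQQ]
  unfold Cospectral
  apply Polynomial.map_injective (Int.castRingHom ℚ) Int.cast_injective
  rw [← Matrix.charpoly_map, ← Matrix.charpoly_map]
  have hm : ∀ G : SimpleGraph V, (G.adjMatrix ℤ).map (Int.castRingHom ℚ) = G.adjMatrix ℚ := by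
    intro G; ext u v
    simp [Matrix.map_apply, SimpleGraph.adjMatrix_apply, apply_ite]
  rw [hm, hm, key]
end

section
/- Let Γ be a finite simple graph and X a subset of its vertices such that the subgraph of Γ induced by X is regular and every vertex outside X has either 0, |X|/2, or |X| neighbors in X. Let Γ' be the graph obtained from Γ by, for each vertex y ∉ X with exactly |X|/2 neighbors in X, deleting the edges between y and its neighbors in X and inserting edges between y and the vertices of X not previously adjacent to y. Then Γ' is cospectral with Γ with respect to the adjacency matrix. -/
open scoped Classical

/-!
Let `n = |X|` and let `Q` act as `(2 / n) J - I` on the coordinates in `X` and as the identity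
elsewhere. `Q` is an involution, and `Q A Q = A'` for the adjacency matrices `A`, `A'` of `Γ`,
`Γ'`. On the blocks `X × X` and `Xᶜ × Xᶜ` this is the regularity of `X` and the invariance of those
adjacencies. For `y ∉ X`, `Q` sends the column `A_{X,y}` to `(2 / n) |N(y) ∩ X| 𝟙 - A_{X,y}`:
this is `A_{X,y}` itself when `|N(y) ∩ X|` is `0` or `n`, and its complement when it is `n / 2`,
which is exactly the switched column `A'_{X,y}`. Hence `A` and `A'` are similar over `ℚ`.
-/

open Matrix

theorem Finset.sum_indicator_one_eq_ncard {V K : Type*} [AddCommMonoidWithOne K] (s : Finset V)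
    (X : Set V) : ∑ v ∈ s, X.indicator (1 : V → K) v = ((s : Set V) ∩ X).ncard := by
  simp only [Set.indicator_apply, Pi.one_apply, Finset.sum_boole]
  rw [← Set.ncard_coe_finset]
  congr
  ext
  simp

theorem Set.indicator_one_dotProduct_self {V K : Type*} [Fintype V] [Semiring K] (X : Set V) :
    X.indicator (1 : V → K) ⬝ᵥ X.indicator 1 = X.ncard := by
  have h : ∀ v, X.indicator (1 : V → K) v * X.indicator 1 v = X.indicator 1 v := fun v => by
    by_cases hv : v ∈ X <;> simp [hv]
  simpa [dotProduct, h] using Finset.sum_indicator_one_eq_ncard (K := K) Finset.univ X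

noncomputable def gmSwitchingMatrix {V : Type*} [Fintype V] [DecidableEq V] (K : Type*) [Field K]
    (X : Set V) : Matrix V V K :=
  (2 / X.ncard : K) • vecMulVec (X.indicator 1) (X.indicator 1) +
    diagonal fun v => if v ∈ X then -1 else 1

section GMSwitchingMatrix

variable {V K : Type*} [Fintype V] [DecidableEq V] [Field K]

theorem gmSwitchingMatrix_mul_self (X : Set V) :
    gmSwitchingMatrix K X * gmSwitchingMatrix K X = 1 := by
  set χ : V → K := X.indicator 1
  set c : K := 2 / X.ncard
  set B := vecMulVec χ χ
  set S : Matrix V V K := diagonal fun v => if v ∈ X then -1 else 1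
  have hQ : gmSwitchingMatrix K X = c • B + S := rfl
  have hSχ : S *ᵥ χ = -χ := by
    ext v
    by_cases hv : v ∈ X <;> simp [S, χ, hv, mulVec_diagonal]
  have hχS : χ ᵥ* S = -χ := by
    ext v
    by_cases hv : v ∈ X <;> simp [S, χ, hv, vecMul_diagonal]
  have hBB : B * B = (X.ncard : K) • B := by
    rw [vecMulVec_mul_vecMulVec, Set.indicator_one_dotProduct_self, vecMulVec_smul]
  have hSB : S * B = -B := by rw [mul_vecMulVec, hSχ, neg_vecMulVec]
  have hBS : B * S = -B := by rw [vecMulVec_mul, hχS, vecMulVec_neg]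
  have hSS : S * S = 1 := by
    rw [diagonal_mul_diagonal, ← diagonal_one]
    congr 1
    ext v
    by_cases hv : v ∈ X <;> simp [hv]
  -- when `(X.ncard : K) = 0` this holds because `c = 2 / 0 = 0`
  have hc : c * (c * X.ncard - 2) = 0 := by
    rcases eq_or_ne (X.ncard : K) 0 with h | h
    · simp [c, h]
    · rw [div_mul_cancel₀ _ h, sub_self, mul_zero]
  calc gmSwitchingMatrix K X * gmSwitchingMatrix K X
      = (c * (c * X.ncard - 2)) • B + S * S := by
        rw [hQ, add_mul, mul_add, mul_add, Matrix.smul_mul, Matrix.smul_mul, Matrix.mul_smul,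
          Matrix.mul_smul, hBB, hSB, hBS]
        module
    _ = 1 := by rw [hc, zero_smul, zero_add, hSS]

theorem gmSwitchingMatrix_mul_apply (M : Matrix V V K) (X : Set V) (u w : V) :
    (gmSwitchingMatrix K X * M) u w =
      2 / X.ncard * X.indicator 1 u * (X.indicator 1 ᵥ* M) w +
        (if u ∈ X then -1 else 1) * M u w := by
  simp [gmSwitchingMatrix, add_mul, vecMulVec_mul, vecMulVec_apply, mul_assoc]

theorem mul_gmSwitchingMatrix_apply (M : Matrix V V K) (X : Set V) (u w : V) :
    (M * gmSwitchingMatrix K X) u w =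
      2 / X.ncard * (M *ᵥ X.indicator 1) u * X.indicator 1 w +
        M u w * (if w ∈ X then -1 else 1) := by
  simp [gmSwitchingMatrix, mul_add, mul_vecMulVec, vecMulVec_apply, mul_assoc]

end GMSwitchingMatrix

namespace SimpleGraph

variable {V : Type*}

section

variable [Fintype V]

theorem cospectral_of_charpoly_adjMatrix_eq [DecidableEq V] (K : Type*) [CommRing K]
    [CharZero K] {G H : SimpleGraph V} (h : (G.adjMatrix K).charpoly = (H.adjMatrix K).charpoly) :
    Cospectral G H := by
  have hmap : ∀ G : SimpleGraph V, (G.adjMatrix ℤ).map (Int.castRingHom K) = G.adjMatrix K := by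
    intro G
    ext u v
    simp [adjMatrix_apply, apply_ite]
  apply Polynomial.map_injective (Int.castRingHom K) Int.cast_injective
  rw [← charpoly_map, ← charpoly_map, hmap, hmap, h]

theorem adjMatrix_mulVec_indicator_one_apply {K : Type*} [NonAssocSemiring K]
    (G : SimpleGraph V) (X : Set V) (v : V) :
    (G.adjMatrix K *ᵥ X.indicator 1) v = (G.neighborSet v ∩ X).ncard := by
  rw [adjMatrix_mulVec_apply, Finset.sum_indicator_one_eq_ncard, coe_neighborFinset]

theorem indicator_one_vecMul_adjMatrix_apply {K : Type*} [NonAssocSemiring K]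
    (G : SimpleGraph V) (X : Set V) (v : V) :
    (X.indicator 1 ᵥ* G.adjMatrix K) v = (G.neighborSet v ∩ X).ncard := by
  rw [adjMatrix_vecMul_apply, ← adjMatrix_mulVec_apply, adjMatrix_mulVec_indicator_one_apply]

theorem adj_of_ncard_neighborSet_inter_eq_ncard {G : SimpleGraph V} {X : Set V} {y x : V}
    (hy : (G.neighborSet y ∩ X).ncard = X.ncard) (hx : x ∈ X) : G.Adj y x := by
  have h := Set.eq_of_subset_of_ncard_le Set.inter_subset_right hy.ge
  exact (h.symm ▸ hx : x ∈ G.neighborSet y ∩ X).1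

theorem not_adj_of_ncard_neighborSet_inter_eq_zero {G : SimpleGraph V} {X : Set V} {y x : V}
    (hy : (G.neighborSet y ∩ X).ncard = 0) (hx : x ∈ X) : ¬G.Adj y x := by
  intro hxy
  rw [Set.ncard_eq_zero] at hy
  exact hy.subset ⟨hxy, hx⟩

theorem ncard_neighborSet_inter_compl_eq {G G' : SimpleGraph V} {X : Set V} {y : V}
    (h : ∀ x ∈ X, G'.Adj y x ↔ ¬G.Adj y x) :
    (G'.neighborSet y ∩ X).ncard = X.ncard - (G.neighborSet y ∩ X).ncard := by
  have hset : G'.neighborSet y ∩ X = X \ (G.neighborSet y ∩ X) := by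
    ext x
    simp only [Set.mem_inter_iff, mem_neighborSet, Set.mem_sdiff]
    constructor
    · rintro ⟨hxy, hx⟩
      exact ⟨hx, fun h' => (h x hx).1 hxy h'.1⟩
    · rintro ⟨hx, hxy⟩
      exact ⟨(h x hx).2 fun h' => hxy ⟨h', hx⟩, hx⟩
  rw [hset, Set.ncard_sdiff Set.inter_subset_right]

end

structure IsGMSwitching (Γ Γ' : SimpleGraph V) (X : Set V) : Prop where
  regular : ∃ d : ℕ, ∀ x ∈ X, (Γ.neighborSet x ∩ X).ncard = d
  ncard_neighborSet_inter_cases : ∀ y ∉ X,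
    (Γ.neighborSet y ∩ X).ncard = 0 ∨ 2 * (Γ.neighborSet y ∩ X).ncard = X.ncard ∨
      (Γ.neighborSet y ∩ X).ncard = X.ncard
  adj_iff_not_adj_of_half : ∀ y ∉ X, ∀ x ∈ X,
    2 * (Γ.neighborSet y ∩ X).ncard = X.ncard → (Γ'.Adj y x ↔ ¬Γ.Adj y x)
  adj_iff_adj_of_not_half : ∀ y ∉ X, ∀ x ∈ X,
    2 * (Γ.neighborSet y ∩ X).ncard ≠ X.ncard → (Γ'.Adj y x ↔ Γ.Adj y x)
  adj_iff_adj_of_same_side : ∀ u v : V,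
    (u ∈ X ∧ v ∈ X ∨ u ∉ X ∧ v ∉ X) → (Γ'.Adj u v ↔ Γ.Adj u v)

namespace IsGMSwitching

variable {Γ Γ' : SimpleGraph V} {X : Set V}

theorem neighborSet_inter_eq_of_mem (h : IsGMSwitching Γ Γ' X) {u : V}
    (hu : u ∈ X) : Γ'.neighborSet u ∩ X = Γ.neighborSet u ∩ X := by
  ext x
  simp only [Set.mem_inter_iff, mem_neighborSet]
  exact and_congr_left fun hx => h.adj_iff_adj_of_same_side u x (Or.inl ⟨hu, hx⟩)

variable [Fintype V]

theorem ncard_neighborSet_inter_eq_of_notMem (h : IsGMSwitching Γ Γ' X) {y : V} (hy : y ∉ X) :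
    (Γ'.neighborSet y ∩ X).ncard = (Γ.neighborSet y ∩ X).ncard := by
  by_cases hhalf : 2 * (Γ.neighborSet y ∩ X).ncard = X.ncard
  · rw [ncard_neighborSet_inter_compl_eq fun x hx => h.adj_iff_not_adj_of_half y hy x hx hhalf]
    omega
  · congr 1
    ext x
    simp only [Set.mem_inter_iff, mem_neighborSet]
    exact and_congr_left fun hx => h.adj_iff_adj_of_not_half y hy x hx hhalf

theorem adjMatrix_apply_of_notMem_of_mem {K : Type*} [Field K] [CharZero K]
    (h : IsGMSwitching Γ Γ' X) {y x : V} (hy : y ∉ X) (hx : x ∈ X) :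
    Γ'.adjMatrix K y x = 2 / X.ncard * (Γ.neighborSet y ∩ X).ncard - Γ.adjMatrix K y x := by
  have hpos : 0 < X.ncard := (Set.ncard_pos X.toFinite).2 ⟨x, hx⟩
  rcases h.ncard_neighborSet_inter_cases y hy with hzero | hhalf | hfull
  · have hne : 2 * (Γ.neighborSet y ∩ X).ncard ≠ X.ncard := by omega
    simp [adjMatrix_apply, hzero, h.adj_iff_adj_of_not_half y hy x hx hne,
      not_adj_of_ncard_neighborSet_inter_eq_zero hzero hx]
  · have hcount : ((Γ.neighborSet y ∩ X).ncard : K) ≠ 0 := by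
      exact_mod_cast (show (Γ.neighborSet y ∩ X).ncard ≠ 0 by omega)
    have hcoeff : (2 : K) / X.ncard * (Γ.neighborSet y ∩ X).ncard = 1 := by
      rw [← hhalf, Nat.cast_mul, Nat.cast_ofNat]
      field_simp
    by_cases hxy : Γ.Adj y x <;>
      simp [adjMatrix_apply, hcoeff, h.adj_iff_not_adj_of_half y hy x hx hhalf, hxy]
  · have hne : 2 * (Γ.neighborSet y ∩ X).ncard ≠ X.ncard := by omega
    have hX : (X.ncard : K) ≠ 0 := by exact_mod_cast hpos.ne'
    rw [hfull, div_mul_cancel₀ _ hX]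
    norm_num [adjMatrix_apply, h.adj_iff_adj_of_not_half y hy x hx hne,
      adj_of_ncard_neighborSet_inter_eq_ncard hfull hx]

variable [DecidableEq V]

theorem gmSwitchingMatrix_mul_adjMatrix {K : Type*} [Field K] [CharZero K]
    (h : IsGMSwitching Γ Γ' X) :
    gmSwitchingMatrix K X * Γ.adjMatrix K = Γ'.adjMatrix K * gmSwitchingMatrix K X := by
  obtain ⟨d, hd⟩ := h.regular
  ext u w
  rw [gmSwitchingMatrix_mul_apply, mul_gmSwitchingMatrix_apply,
    indicator_one_vecMul_adjMatrix_apply, adjMatrix_mulVec_indicator_one_apply]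
  have hsame (hside : u ∈ X ∧ w ∈ X ∨ u ∉ X ∧ w ∉ X) :
      Γ'.adjMatrix K u w = Γ.adjMatrix K u w := by
    simp [adjMatrix_apply, h.adj_iff_adj_of_same_side u w hside]
  by_cases hu : u ∈ X <;> by_cases hw : w ∈ X
  · rw [hsame (Or.inl ⟨hu, hw⟩), h.neighborSet_inter_eq_of_mem hu, hd u hu, hd w hw]
    simp only [Set.indicator_of_mem hu, Set.indicator_of_mem hw, if_pos hu, if_pos hw,
      Pi.one_apply]
    ring
  · rw [← (isSymm_adjMatrix (α := K) Γ').apply, h.adjMatrix_apply_of_notMem_of_mem hw hu,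
      (isSymm_adjMatrix Γ).apply]
    simp only [Set.indicator_of_mem hu, Set.indicator_of_notMem hw, if_pos hu, if_neg hw,
      Pi.one_apply]
    ring
  · rw [h.adjMatrix_apply_of_notMem_of_mem hu hw, h.ncard_neighborSet_inter_eq_of_notMem hu]
    simp only [Set.indicator_of_notMem hu, Set.indicator_of_mem hw, if_neg hu, if_pos hw,
      Pi.one_apply]
    ring
  · rw [hsame (Or.inr ⟨hu, hw⟩)]
    simp only [Set.indicator_of_notMem hu, Set.indicator_of_notMem hw, if_neg hu, if_neg hw]
    ring

theorem cospectral (h : IsGMSwitching Γ Γ' X) : Cospectral Γ Γ' := by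
  set Q := gmSwitchingMatrix ℚ X
  have hQ : Q * Q = 1 := gmSwitchingMatrix_mul_self X
  have hconj : Γ'.adjMatrix ℚ = Q * Γ.adjMatrix ℚ * Q := by
    rw [h.gmSwitchingMatrix_mul_adjMatrix, Matrix.mul_assoc, hQ, Matrix.mul_one]
  apply cospectral_of_charpoly_adjMatrix_eq ℚ
  rw [hconj, charpoly_mul_comm, ← Matrix.mul_assoc, hQ, Matrix.one_mul]

end IsGMSwitching

end SimpleGraph

/-- Godsil–McKay switching with a single switching set.
Let `X` be a set of vertices of `Γ` such that the subgraph induced by `X` is regular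
(every `x ∈ X` has the same number of neighbors inside `X`) and every vertex outside `X`
has `0`, `|X|/2` or `|X|` neighbors in `X`.  If `Γ'` is obtained from `Γ` by switching
the adjacencies towards `X` of every outside vertex having exactly half of `X` as
neighbors (leaving all other adjacencies unchanged), then `Γ'` is cospectral with `Γ`. -/
theorem stmt1 {V : Type*} [Fintype V] [DecidableEq V]
    (Γ Γ' : SimpleGraph V) (X : Set V)
    (hreg : ∃ d : ℕ, ∀ x ∈ X, (Γ.neighborSet x ∩ X).ncard = d)
    (hhalf : ∀ y ∉ X,
      (Γ.neighborSet y ∩ X).ncard = 0 ∨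
        2 * (Γ.neighborSet y ∩ X).ncard = X.ncard ∨
        (Γ.neighborSet y ∩ X).ncard = X.ncard)
    (hswitch : ∀ y ∉ X, ∀ x ∈ X,
      (2 * (Γ.neighborSet y ∩ X).ncard = X.ncard → (Γ'.Adj y x ↔ ¬ Γ.Adj y x)) ∧
      (2 * (Γ.neighborSet y ∩ X).ncard ≠ X.ncard → (Γ'.Adj y x ↔ Γ.Adj y x)))
    (hsame : ∀ u v : V, ((u ∈ X ∧ v ∈ X) ∨ (u ∉ X ∧ v ∉ X)) → (Γ'.Adj u v ↔ Γ.Adj u v)) :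
    Cospectral Γ Γ' :=
  SimpleGraph.IsGMSwitching.cospectral
    { regular := hreg
      ncard_neighborSet_inter_cases := hhalf
      adj_iff_not_adj_of_half := fun y hy x hx => (hswitch y hy x hx).1
      adj_iff_adj_of_not_half := fun y hy x hx => (hswitch y hy x hx).2
      adj_iff_adj_of_same_side := hsame }
end

section
/- For every integer k ≥ 2, the graph G on vertex set Z/(3k−1)Z, in which distinct vertices i and j are adjacent if and only if j − i is congruent modulo 3k−1 to one of k, k+1, …, 2k−1, has vertex-connectivity exactly k; in particular, between any two distinct nonadjacent vertices of G there exist k pairwise internally vertex-disjoint paths. -/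
/-- The circulant graph on `ZMod (3*k-1)` in which distinct `i`, `j` are adjacent
iff `j - i` is congruent mod `3*k-1` to one of `k, k+1, …, 2*k-1`. -/
def paperCirculant (k : ℕ) : SimpleGraph (ZMod (3 * k - 1)) :=
  SimpleGraph.fromRel (fun i j => (j - i).val ∈ Finset.Icc k (2 * k - 1))

/-- `G` has vertex-connectivity exactly `n`: some set of `n` vertices disconnects `G`
(i.e. the graph induced on the complement is not connected), and no smaller set does. -/
def HasVertexConnectivity {V : Type*} (G : SimpleGraph V) (n : ℕ) : Prop :=
  (∃ S : Set V, S.ncard = n ∧ ¬(G.induce Sᶜ).Connected) ∧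
    ∀ S : Set V, S.ncard < n → (G.induce Sᶜ).Connected

/-!
If `y - x ≡ d` with `1 ≤ d ≤ k - 1`, then for `i < k` the walks `x → x+k+i → y` (when `d ≤ i`) and
`x → x+k+i → x+2k+i → y` (when `i < d`) are `k` paths whose inner vertices are pairwise distinct;
if `y - x ≡ d` with `2k ≤ d ≤ 3k - 2`, reverse the paths from `y` to `x`. These are all the
non-adjacent pairs, so fewer than `k` vertices cannot separate anything. Conversely, the `k`
neighbours of `0` separate it from `1`.
-/

namespace SimpleGraph

variable {V : Type*} {G : SimpleGraph V}

def InternallyDisjointPaths {ι : Type*} {x y : V} (P : ι → G.Path x y) : Prop :=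
  ∀ i j, i ≠ j → ∀ v, v ∈ (P i).1.support → v ∈ (P j).1.support → v = x ∨ v = y

namespace InternallyDisjointPaths

variable {ι : Type*} {x y : V} {P : ι → G.Path x y}

lemma reverse (hP : InternallyDisjointPaths P) :
    InternallyDisjointPaths fun i => (P i).reverse := by
  intro i j hij v hi hj
  simp only [Path.reverse_coe, Walk.support_reverse, List.mem_reverse] at hi hj
  exact (hP i j hij v hi hj).symm

lemma exists_support_disjoint (hP : InternallyDisjointPaths P) {S : Set V} (hS : S.Finite)
    (hx : x ∉ S) (hy : y ∉ S) (hcard : S.ncard < Nat.card ι) :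
    ∃ i, ∀ v ∈ (P i).1.support, v ∉ S := by
  by_contra! h
  choose f hf_support hf_mem using h
  have hf : Function.Injective fun i => (⟨f i, hf_mem i⟩ : S) := by
    intro i j hij
    by_contra hne
    have hfij : f i = f j := congrArg Subtype.val hij
    rcases hP i j hne (f i) (hf_support i) (hfij ▸ hf_support j) with h | h
    · exact hx (h ▸ hf_mem i)
    · exact hy (h ▸ hf_mem i)
  have := hS.to_subtype
  have := Nat.card_le_card_of_injective _ hf
  rw [Nat.card_coe_set_eq] at this
  omega

end InternallyDisjointPaths

lemma exists_path_of_adj_adj {x m y : V} (h₁ : G.Adj x m) (h₂ : G.Adj m y) (hxy : x ≠ y) :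
    ∃ P : G.Path x y, P.1.support = [x, m, y] :=
  ⟨⟨.cons h₁ (.cons h₂ .nil), by simp [Walk.isPath_def, h₁.ne, h₂.ne, hxy]⟩, rfl⟩

lemma exists_path_of_adj_adj_adj {x m₁ m₂ y : V} (h₁ : G.Adj x m₁) (h₂ : G.Adj m₁ m₂)
    (h₃ : G.Adj m₂ y) (hxm₂ : x ≠ m₂) (hxy : x ≠ y) (hm₁y : m₁ ≠ y) :
    ∃ P : G.Path x y, P.1.support = [x, m₁, m₂, y] :=
  ⟨⟨.cons h₁ (.cons h₂ (.cons h₃ .nil)), by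
    simp [Walk.isPath_def, h₁.ne, h₂.ne, h₃.ne, hxm₂, hxy, hm₁y]⟩, rfl⟩

lemma preconnected_induce_compl_of_internallyDisjointPaths {n : ℕ}
    (h : ∀ x y, x ≠ y → ¬G.Adj x y → ∃ P : Fin n → G.Path x y, InternallyDisjointPaths P)
    {S : Set V} (hS : S.Finite) (hcard : S.ncard < n) : (G.induce Sᶜ).Preconnected := by
  rintro ⟨x, hx⟩ ⟨y, hy⟩
  by_cases hxy : x = y
  · subst hxy
    rfl
  by_cases hadj : G.Adj x y
  · exact (induce_adj.2 hadj).reachable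
  obtain ⟨P, hP⟩ := h x y hxy hadj
  obtain ⟨i, hi⟩ := hP.exists_support_disjoint hS hx hy (by simpa using hcard)
  exact ⟨(P i).1.induce Sᶜ hi⟩

lemma not_connected_induce_compl_neighborSet {u v : V} (huv : u ≠ v) (hadj : ¬G.Adj u v) :
    ¬(G.induce (G.neighborSet u)ᶜ).Connected := by
  intro hconn
  obtain ⟨w⟩ := hconn.preconnected ⟨u, G.irrefl⟩ ⟨v, hadj⟩
  cases w with
  | nil => exact huv rfl
  | @cons _ m _ h _ => exact m.2 h

end SimpleGraph

open SimpleGraph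

lemma ZMod.add_natCast_inj {n a b : ℕ} (x : ZMod n) (ha : a < n) (hb : b < n) :
    x + (a : ZMod n) = x + b ↔ a = b := by
  rw [add_right_inj, ZMod.natCast_eq_natCast_iff', Nat.mod_eq_of_lt ha, Nat.mod_eq_of_lt hb]

section paperCirculant

variable {k : ℕ}

lemma paperCirculant_adj_iff (hk : 1 ≤ k) {u v : ZMod (3 * k - 1)} :
    (paperCirculant k).Adj u v ↔ (v - u).val ∈ Finset.Icc k (2 * k - 1) := by
  have : NeZero (3 * k - 1) := ⟨by omega⟩
  rw [paperCirculant, fromRel_adj]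
  constructor
  · rintro ⟨hne, h | h⟩
    · exact h
    · have : NeZero (v - u) := ⟨sub_ne_zero.2 hne.symm⟩
      have := ZMod.val_lt (v - u)
      rw [← neg_sub, ZMod.val_neg_of_ne_zero, Finset.mem_Icc] at h
      rw [Finset.mem_Icc]
      omega
  · intro h
    refine ⟨?_, Or.inl h⟩
    rintro rfl
    simp only [sub_self, ZMod.val_zero, Finset.mem_Icc] at h
    omega

lemma paperCirculant_adj_add_natCast (hk : 1 ≤ k) (x : ZMod (3 * k - 1)) {a b : ℕ}
    (hab : a ≤ b) (h : b - a ∈ Finset.Icc k (2 * k - 1)) :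
    (paperCirculant k).Adj (x + a) (x + b) := by
  rw [paperCirculant_adj_iff hk, add_sub_add_left_eq_sub, ← Nat.cast_sub hab,
    ZMod.val_cast_of_lt]
  · exact h
  · rw [Finset.mem_Icc] at h
    omega

lemma paperCirculant_neighborSet_zero (hk : 1 ≤ k) :
    (paperCirculant k).neighborSet 0 = ZMod.val ⁻¹' Set.Icc k (2 * k - 1) := by
  ext v
  simp [paperCirculant_adj_iff hk]

lemma ncard_paperCirculant_neighborSet_zero (hk : 1 ≤ k) :
    ((paperCirculant k).neighborSet 0).ncard = k := by
  have : NeZero (3 * k - 1) := ⟨by omega⟩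
  rw [paperCirculant_neighborSet_zero hk,
    Set.ncard_preimage_of_injective_subset_range (ZMod.val_injective _), Set.ncard_Icc_nat]
  · omega
  · rintro a ⟨-, ha⟩
    exact ⟨a, ZMod.val_cast_of_lt (by omega)⟩

lemma paperCirculant_exists_internallyDisjointPaths_of_val_sub_lt {x y : ZMod (3 * k - 1)}
    (hxy : x ≠ y) (hd : (y - x).val < k) :
    ∃ P : Fin k → (paperCirculant k).Path x y, InternallyDisjointPaths P := by
  have hk : 1 ≤ k := by omega
  have : NeZero (3 * k - 1) := ⟨by omega⟩
  set d := (y - x).val with hd_def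
  have hd₀ : d ≠ 0 := by
    rw [hd_def, ZMod.val_ne_zero, sub_ne_zero]
    exact hxy.symm
  have hy : y = x + d := by
    rw [hd_def, ZMod.natCast_zmod_val, add_sub_cancel]
  have hx : x = x + (0 : ℕ) := by simp
  -- all offsets are below `3k - 1`, so paths with disjoint inner offsets are internally disjoint
  have hpath : ∀ i : Fin k, ∃ P : (paperCirculant k).Path x y,
      ∀ v ∈ P.1.support, ∃ a, (a = 0 ∨ a = d ∨ a = k + i ∨ a = 2 * k + i ∧ i < d) ∧ v = x + a := by
    intro i
    have hi := i.2
    have h₁ : (paperCirculant k).Adj x (x + (k + i : ℕ)) := by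
      have := paperCirculant_adj_add_natCast hk x (a := 0) (b := k + i) (by omega)
        (by rw [Finset.mem_Icc]; omega)
      rwa [Nat.cast_zero, add_zero] at this
    rcases le_or_gt d i with hdi | hid
    · have h₂ : (paperCirculant k).Adj (x + (k + i : ℕ)) y := by
        rw [hy]
        exact (paperCirculant_adj_add_natCast hk x (by omega) (by rw [Finset.mem_Icc]; omega)).symm
      obtain ⟨P, hP⟩ := exists_path_of_adj_adj h₁ h₂ hxy
      refine ⟨P, fun v hv => ?_⟩
      simp only [hP, List.mem_cons, List.not_mem_nil, or_false] at hv
      rcases hv with rfl | rfl | rfl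
      · exact ⟨0, by omega, hx⟩
      · exact ⟨k + i, by omega, rfl⟩
      · exact ⟨d, by omega, hy⟩
    · have h₂ : (paperCirculant k).Adj (x + (k + i : ℕ)) (x + (2 * k + i : ℕ)) :=
        paperCirculant_adj_add_natCast hk x (by omega) (by rw [Finset.mem_Icc]; omega)
      have h₃ : (paperCirculant k).Adj (x + (2 * k + i : ℕ)) y := by
        rw [hy]
        exact (paperCirculant_adj_add_natCast hk x (by omega) (by rw [Finset.mem_Icc]; omega)).symm
      have hxm₂ : x ≠ x + (2 * k + i : ℕ) := by
        nth_rw 1 [hx]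
        exact (ZMod.add_natCast_inj x (by omega) (by omega)).not.2 (by omega)
      have hm₁y : x + (k + i : ℕ) ≠ y := by
        rw [hy]
        exact (ZMod.add_natCast_inj x (by omega) (by omega)).not.2 (by omega)
      obtain ⟨P, hP⟩ := exists_path_of_adj_adj_adj h₁ h₂ h₃ hxm₂ hxy hm₁y
      refine ⟨P, fun v hv => ?_⟩
      simp only [hP, List.mem_cons, List.not_mem_nil, or_false] at hv
      rcases hv with rfl | rfl | rfl | rfl
      · exact ⟨0, by omega, hx⟩
      · exact ⟨k + i, by omega, rfl⟩
      · exact ⟨2 * k + i, by omega, rfl⟩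
      · exact ⟨d, by omega, hy⟩
  choose P hP using hpath
  refine ⟨P, fun i j hij v hvi hvj => ?_⟩
  obtain ⟨a, ha, rfl⟩ := hP i v hvi
  obtain ⟨b, hb, hab⟩ := hP j _ hvj
  have hij : i.val ≠ j.val := Fin.val_ne_of_ne hij
  have hab : a = b := (ZMod.add_natCast_inj x (by omega) (by omega)).1 hab
  have : a = 0 ∨ a = d := by omega
  rcases this with rfl | rfl
  · simp
  · exact Or.inr hy.symm

lemma paperCirculant_exists_internallyDisjointPaths (hk : 1 ≤ k) {x y : ZMod (3 * k - 1)}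
    (hxy : x ≠ y) (hadj : ¬(paperCirculant k).Adj x y) :
    ∃ P : Fin k → (paperCirculant k).Path x y, InternallyDisjointPaths P := by
  have : NeZero (3 * k - 1) := ⟨by omega⟩
  rcases lt_or_ge (y - x).val k with hlt | hge
  · exact paperCirculant_exists_internallyDisjointPaths_of_val_sub_lt hxy hlt
  · have : NeZero (y - x) := ⟨sub_ne_zero.2 hxy.symm⟩
    have hd : (y - x).val ∉ Finset.Icc k (2 * k - 1) := by rwa [← paperCirculant_adj_iff hk]
    have := ZMod.val_lt (y - x)
    rw [Finset.mem_Icc] at hd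
    have hlt : (x - y).val < k := by
      rw [← neg_sub, ZMod.val_neg_of_ne_zero]
      omega
    obtain ⟨P, hP⟩ := paperCirculant_exists_internallyDisjointPaths_of_val_sub_lt hxy.symm hlt
    exact ⟨_, hP.reverse⟩

end paperCirculant

/-- For every `k ≥ 2` the circulant graph has vertex-connectivity exactly `k`;
in particular, between any two distinct nonadjacent vertices there exist `k` pairwise
internally vertex-disjoint paths. -/
theorem stmt5 (k : ℕ) (hk : 2 ≤ k) :
    HasVertexConnectivity (paperCirculant k) k ∧
      ∀ x y : ZMod (3 * k - 1), x ≠ y → ¬(paperCirculant k).Adj x y →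
        ∃ P : Fin k → (paperCirculant k).Path x y,
          ∀ i j : Fin k, i ≠ j →
            ∀ v, v ∈ (P i).1.support → v ∈ (P j).1.support → v = x ∨ v = y := by
  have : Fact (1 < 3 * k - 1) := ⟨by omega⟩
  have hk₁ : 1 ≤ k := by omega
  have hpaths := fun x y => @paperCirculant_exists_internallyDisjointPaths k hk₁ x y
  refine ⟨⟨⟨_, ncard_paperCirculant_neighborSet_zero hk₁, ?_⟩, fun S hS => ?_⟩, hpaths⟩
  · refine not_connected_induce_compl_neighborSet (v := 1) zero_ne_one ?_
    rw [paperCirculant_adj_iff hk₁, sub_zero, ZMod.val_one, Finset.mem_Icc]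
    omega
  · have hS_ne : S ≠ Set.univ := by
      rintro rfl
      rw [Set.ncard_univ, Nat.card_zmod] at hS
      omega
    have := (Set.nonempty_compl.2 hS_ne).to_subtype
    exact (connected_iff _).2
      ⟨preconnected_induce_compl_of_internallyDisjointPaths hpaths S.toFinite hS, this⟩
end

section
/- For every integer k ≥ 2, the graph Γ defined below has vertex-connectivity exactly 2k. -/
open scoped Classical

/-- A graph is `d`-regular if every vertex has exactly `d` neighbors. -/
def IsRegularGraph {V : Type*} (G : SimpleGraph V) (d : ℕ) : Prop :=
  ∀ v : V, (G.neighborSet v).ncard = d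

/-- Adjacency rule of the circulant graph `G` of the paper: `i ~ j` iff
`j - i ∈ {k, …, 2k-1} (mod 3k-1)`. -/
def circRel (k : ℕ) (i j : ZMod (3 * k - 1)) : Prop :=
  (j - i).val ∈ Finset.Icc k (2 * k - 1)

/-- The reordering `V0, V1, V2, V3` of the vertices of `G`:  position `0` is vertex `0`,
positions `1, …, k` are `V1 = {k, …, 2k-1}`, positions `k+1, …, 2k-1` are
`V2 = {1, …, k-1}`, and positions `2k, …, 3k-2` are `V3 = {2k, …, 3k-2}`.
Thus `B` (the bottom-right block) is the adjacency matrix of `G` in this order. -/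
def sigma (k : ℕ) (p : Fin (3 * k - 1)) : ZMod (3 * k - 1) :=
  if p.val = 0 then 0
  else if p.val ≤ k then ((k + p.val - 1 : ℕ) : ZMod (3 * k - 1))
  else if p.val ≤ 2 * k - 1 then ((p.val - k : ℕ) : ZMod (3 * k - 1))
  else ((p.val : ℕ) : ZMod (3 * k - 1))

/-- The vertex set of `Γ` and `Γ'`: `X` (size `2k`), `U` (size `k+1`), `V` (size `3k-1`). -/
abbrev VC (k : ℕ) := Fin (2 * k) ⊕ (Fin (k + 1) ⊕ Fin (3 * k - 1))

/-- Entries of the `2k × (k+1)` matrix `N = [I_{k+1}; J_{k-1,k+1}]`. -/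
def NRel (k : ℕ) (x : Fin (2 * k)) (u : Fin (k + 1)) : Prop :=
  x.val = u.val ∨ k + 1 ≤ x.val

/-- Entries of the `2k × (3k-1)` matrix `M = [J-N | K | J-K]`,
where `K = [O_{k,k-1}; J_{k,k-1}]`. -/
def MRel (k : ℕ) (x : Fin (2 * k)) (v : Fin (3 * k - 1)) : Prop :=
  if v.val ≤ k then ¬(x.val = v.val ∨ k + 1 ≤ x.val)
  else if v.val ≤ 2 * k - 1 then k ≤ x.val
  else x.val < k

/-- The relation defining `Γ`, whose adjacency matrix in block form is
`[[O, N, M], [Nᵀ, J-I, O], [Mᵀ, O, B]]`. -/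
def gammaRel (k : ℕ) : VC k → VC k → Prop
  | Sum.inl x, Sum.inr (Sum.inl u) => NRel k x u
  | Sum.inl x, Sum.inr (Sum.inr v) => MRel k x v
  | Sum.inr (Sum.inl u), Sum.inr (Sum.inl u') => u ≠ u'
  | Sum.inr (Sum.inr v), Sum.inr (Sum.inr v') => circRel k (sigma k v) (sigma k v')
  | _, _ => False

/-- The graph `Γ`. -/
def Gamma (k : ℕ) : SimpleGraph (VC k) := SimpleGraph.fromRel (gammaRel k)

/-- The relation defining `Γ'`, obtained from `Γ` by Godsil–McKay switching:
`N` is replaced by `J - N` and `M` by `J - M`. -/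
def gammaRel' (k : ℕ) : VC k → VC k → Prop
  | Sum.inl x, Sum.inr (Sum.inl u) => ¬NRel k x u
  | Sum.inl x, Sum.inr (Sum.inr v) => ¬MRel k x v
  | Sum.inr (Sum.inl u), Sum.inr (Sum.inl u') => u ≠ u'
  | Sum.inr (Sum.inr v), Sum.inr (Sum.inr v') => circRel k (sigma k v) (sigma k v')
  | _, _ => False

/-- The graph `Γ'`. -/
def Gamma' (k : ℕ) : SimpleGraph (VC k) := SimpleGraph.fromRel (gammaRel' k)

open SimpleGraph Sum Finset

section
variable {k : ℕ}

lemma st8_valadd (hk : 2 ≤ k) (i : ZMod (3*k-1)) (o : ℕ) (ho : o < 3*k-1) :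
    ((i + (o : ZMod (3*k-1))) - i).val = o := by
  haveI : NeZero (3*k-1) := ⟨by omega⟩
  rw [add_sub_cancel_left, ZMod.val_cast_of_lt ho]

lemma st8_cast_inj (hk : 2 ≤ k) {o o' : ℕ} (ho : o < 3*k-1) (ho' : o' < 3*k-1)
    (h : (o : ZMod (3*k-1)) = (o' : ZMod (3*k-1))) : o = o' := by
  haveI : NeZero (3*k-1) := ⟨by omega⟩
  have := congrArg ZMod.val h
  rwa [ZMod.val_cast_of_lt ho, ZMod.val_cast_of_lt ho'] at this

lemma st8_sigma_surj (hk : 2 ≤ k) : Function.Surjective (sigma k) := by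
  haveI : NeZero (3*k-1) := ⟨by omega⟩
  intro v
  have hv : v.val < 3*k-1 := ZMod.val_lt v
  have hcast : ((v.val : ℕ) : ZMod (3*k-1)) = v := ZMod.natCast_rightInverse v
  by_cases h0 : v.val = 0
  · refine ⟨⟨0, by omega⟩, ?_⟩
    rw [sigma, if_pos rfl]
    rw [← hcast, h0]; simp
  · by_cases h1 : v.val ≤ k - 1
    · refine ⟨⟨v.val + k, by omega⟩, ?_⟩
      rw [sigma]
      rw [if_neg (show ¬(v.val + k = 0) by omega), if_neg (show ¬(v.val + k ≤ k) by omega),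
        if_pos (show v.val + k ≤ 2*k-1 by omega)]
      have : v.val + k - k = v.val := by omega
      rw [this, hcast]
    · by_cases h2 : v.val ≤ 2*k-1
      · refine ⟨⟨v.val - k + 1, by omega⟩, ?_⟩
        rw [sigma]
        rw [if_neg (show ¬(v.val - k + 1 = 0) by omega),
          if_pos (show v.val - k + 1 ≤ k by omega)]
        have : k + (v.val - k + 1) - 1 = v.val := by omega
        rw [this, hcast]
      · refine ⟨⟨v.val, by omega⟩, ?_⟩
        rw [sigma]
        rw [if_neg h0, if_neg (show ¬(v.val ≤ k) by omega),
          if_neg (show ¬(v.val ≤ 2*k-1) by omega)]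
        exact hcast

lemma st8_sigma_inj (hk : 2 ≤ k) : Function.Injective (sigma k) := by
  haveI : NeZero (3*k-1) := ⟨by omega⟩
  exact ((Fintype.bijective_iff_surjective_and_card (sigma k)).2
    ⟨st8_sigma_surj hk, by simp [ZMod.card]⟩).1

lemma st8_adj_XU (x : Fin (2*k)) (u : Fin (k+1)) (h : NRel k x u) :
    (Gamma k).Adj (inl x) (inr (inl u)) := by
  rw [Gamma, SimpleGraph.fromRel_adj]
  exact ⟨by simp, Or.inl h⟩

lemma st8_adj_XV (x : Fin (2*k)) (v : Fin (3*k-1)) (h : MRel k x v) :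
    (Gamma k).Adj (inl x) (inr (inr v)) := by
  rw [Gamma, SimpleGraph.fromRel_adj]
  exact ⟨by simp, Or.inl h⟩

lemma st8_adj_UU (u u' : Fin (k+1)) (h : u ≠ u') :
    (Gamma k).Adj (inr (inl u)) (inr (inl u')) := by
  rw [Gamma, SimpleGraph.fromRel_adj]
  exact ⟨by simpa using h, Or.inl h⟩

lemma st8_adj_VV (hk : 2 ≤ k) (p q : Fin (3*k-1))
    (h : (sigma k q - sigma k p).val ∈ Finset.Icc k (2*k-1)) :
    (Gamma k).Adj (inr (inr p)) (inr (inr q)) := by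
  haveI : NeZero (3*k-1) := ⟨by omega⟩
  have hne : p ≠ q := by
    rintro rfl
    rw [sub_self, ZMod.val_zero, Finset.mem_Icc] at h
    omega
  rw [Gamma, SimpleGraph.fromRel_adj]
  exact ⟨by simpa using hne, Or.inl h⟩

lemma st8_step {S : Set (VC k)} {a b : VC k} (hab : (Gamma k).Adj a b) (ha : a ∈ Sᶜ) (hb : b ∈ Sᶜ) :
    ((Gamma k).induce Sᶜ).Reachable ⟨a, ha⟩ ⟨b, hb⟩ :=
  SimpleGraph.Adj.reachable hab

end
section
variable {k : ℕ}

lemma st8_addsub (hk : 2 ≤ k) (i : ZMod (3*k-1)) (o o' : ℕ) (h : o' ≤ o) :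
    (i + (o : ZMod (3*k-1))) - (i + (o' : ZMod (3*k-1))) = ((o - o' : ℕ) : ZMod (3*k-1)) := by
  rw [Nat.cast_sub h]; ring

/-- deleted positions among the `V`-block -/
noncomputable def st8FV (k : ℕ) (S : Set (VC k)) : Finset (Fin (3*k-1)) :=
  Finset.univ.filter fun p => Sum.inr (Sum.inr p) ∈ S

lemma st8FV_mem {S : Set (VC k)} {p : Fin (3*k-1)} :
    p ∈ st8FV k S ↔ Sum.inr (Sum.inr p) ∈ S := by simp [st8FV]

/-- The circulant-block reachability lemma: if at most `k-1` vertices of the `V`-block are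
deleted, all surviving `V`-vertices are mutually reachable in the induced graph. -/
lemma st8_reachV (hk : 2 ≤ k) (S : Set (VC k)) (hW : (st8FV k S).card ≤ k - 1) :
    ∀ (m : ℕ) (p q : Fin (3*k-1)) (hp : Sum.inr (Sum.inr p) ∈ Sᶜ) (hq : Sum.inr (Sum.inr q) ∈ Sᶜ),
      (sigma k q - sigma k p).val = m →
      ((Gamma k).induce Sᶜ).Reachable ⟨.inr (.inr p), hp⟩ ⟨.inr (.inr q), hq⟩ := by
  haveI : NeZero (3*k-1) := ⟨by omega⟩
  intro m
  induction m using Nat.strong_induction_on with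
  | _ m IH =>
  intro p q hp hq hm
  set W : Finset (ZMod (3*k-1)) := (st8FV k S).image (sigma k) with hWdef
  have hWcard : W.card ≤ k - 1 := le_trans Finset.card_image_le hW
  have hWpos : ∀ r : Fin (3*k-1), sigma k r ∈ W ↔ Sum.inr (Sum.inr r) ∈ S := by
    intro r
    constructor
    · intro h
      obtain ⟨r', hr', he⟩ := Finset.mem_image.1 h
      rw [st8_sigma_inj hk he] at hr'
      exact st8FV_mem.1 hr'
    · intro h
      exact Finset.mem_image.2 ⟨r, st8FV_mem.2 h, rfl⟩
  by_cases h0 : m = 0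
  · subst h0
    have : sigma k q - sigma k p = 0 := (ZMod.val_eq_zero _).1 hm
    have : q = p := st8_sigma_inj hk (sub_eq_zero.1 this)
    subst this
    exact SimpleGraph.Reachable.refl _
  by_cases hin : k ≤ m ∧ m ≤ 2*k-1
  · exact st8_step (st8_adj_VV hk p q (by rw [hm]; exact Finset.mem_Icc.2 hin)) hp hq
  -- setup
  have h0' : 0 < m := Nat.pos_of_ne_zero h0
  have hmlt : m < 3*k-1 := hm ▸ ZMod.val_lt _
  have hcastm : ((m : ℕ) : ZMod (3*k-1)) = sigma k q - sigma k p := by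
    rw [← hm]; exact ZMod.natCast_rightInverse _
  have hji : sigma k q = sigma k p + ((m : ℕ) : ZMod (3*k-1)) := by
    rw [hcastm]; ring
  by_cases hsplit : ∃ t : ZMod (3*k-1), t ∉ W ∧ 0 < (t - sigma k p).val ∧ (t - sigma k p).val < m
  · obtain ⟨t, htW, ht1, ht2⟩ := hsplit
    obtain ⟨r, hr⟩ := st8_sigma_surj hk t
    have hrS : Sum.inr (Sum.inr r) ∈ Sᶜ := by
      intro hc
      exact htW (by rw [← hr]; exact (hWpos r).2 hc)
    have hti : t = sigma k p + (((t - sigma k p).val : ℕ) : ZMod (3*k-1)) := by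
      rw [ZMod.natCast_rightInverse]; ring
    have hseg : (sigma k q - sigma k r).val = m - (t - sigma k p).val := by
      have he : sigma k q - sigma k r =
          (((m - (t - sigma k p).val : ℕ)) : ZMod (3*k-1)) := by
        rw [hr, hji]
        rw (occs := .pos [1]) [hti]
        exact st8_addsub hk _ _ _ (le_of_lt ht2)
      rw [he, ZMod.val_cast_of_lt (by omega)]
    have hfirst : (sigma k r - sigma k p).val = (t - sigma k p).val := by rw [hr]
    exact (IH _ ht2 p r hp hrS hfirst).trans
      (IH _ (by omega) r q hrS hq hseg)
  · push_neg at hsplit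
    -- the whole open gap is deleted
    have hGsub : ∀ o : ℕ, 0 < o → o < m → (sigma k p + (o : ZMod (3*k-1))) ∈ W := by
      intro o ho1 ho2
      by_contra hc
      have hval := st8_valadd hk (sigma k p) o (by omega)
      have := hsplit _ hc (by rw [hval]; omega)
      rw [hval] at this; omega
    set Gp : Finset (ZMod (3*k-1)) :=
      (Finset.Ioo 0 m).image (fun o : ℕ => sigma k p + (o : ZMod (3*k-1))) with hGpdef
    have hinjIoo : ∀ o ∈ Finset.Ioo 0 m, ∀ o' ∈ Finset.Ioo 0 m,
        sigma k p + (o : ZMod (3*k-1)) = sigma k p + (o' : ZMod (3*k-1)) → o = o' := by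
      intro o ho o' ho' he
      rw [Finset.mem_Ioo] at ho ho'
      exact st8_cast_inj hk (by omega) (by omega) (add_left_cancel he)
    have hGpW : Gp ⊆ W := by
      intro z hz
      obtain ⟨o, ho, rfl⟩ := Finset.mem_image.1 hz
      rw [Finset.mem_Ioo] at ho
      exact hGsub o ho.1 ho.2
    have hGpcard : Gp.card = m - 1 := by
      rw [hGpdef, Finset.card_image_of_injOn hinjIoo, Nat.card_Ioo]; omega
    have hmk : m ≤ k := by
      have := Finset.card_le_card hGpW
      omega
    have hmltk : m < k := by
      rcases Nat.lt_or_ge m k with h | h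
      · exact h
      · exact absurd ⟨by omega, by omega⟩ hin
    by_cases hz : ∃ o ∈ Finset.Icc (m+k) (2*k-1), (sigma k p + (o : ZMod (3*k-1))) ∉ W
    · obtain ⟨o, hoIcc, hoW⟩ := hz
      rw [Finset.mem_Icc] at hoIcc
      obtain ⟨r, hr⟩ := st8_sigma_surj hk (sigma k p + (o : ZMod (3*k-1)))
      have hrS : Sum.inr (Sum.inr r) ∈ Sᶜ := fun hc => hoW (by rw [← hr]; exact (hWpos r).2 hc)
      have e1 : (sigma k r - sigma k p).val ∈ Finset.Icc k (2*k-1) := by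
        rw [hr, st8_valadd hk _ o (by omega)]
        exact Finset.mem_Icc.2 ⟨by omega, by omega⟩
      have e2 : (sigma k r - sigma k q).val ∈ Finset.Icc k (2*k-1) := by
        rw [hr, hji, st8_addsub hk _ _ _ (by omega : m ≤ o),
          ZMod.val_cast_of_lt (by omega)]
        exact Finset.mem_Icc.2 ⟨by omega, by omega⟩
      exact (st8_step (st8_adj_VV hk p r e1) hp hrS).trans
        (st8_step (st8_adj_VV hk q r e2) hq hrS).symm
    · push_neg at hz
      set A : Finset (ZMod (3*k-1)) :=
        (Finset.Icc (m+k) (2*k-1)).image (fun o : ℕ => sigma k p + (o : ZMod (3*k-1))) with hAdef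
      have hAW : A ⊆ W := by
        intro z hzA
        obtain ⟨o, ho, rfl⟩ := Finset.mem_image.1 hzA
        exact hz o ho
      have hinjIcc : ∀ o ∈ Finset.Icc (m+k) (2*k-1), ∀ o' ∈ Finset.Icc (m+k) (2*k-1),
          sigma k p + (o : ZMod (3*k-1)) = sigma k p + (o' : ZMod (3*k-1)) → o = o' := by
        intro o ho o' ho' he
        rw [Finset.mem_Icc] at ho ho'
        exact st8_cast_inj hk (by omega) (by omega) (add_left_cancel he)
      have hAcard : A.card = k - m := by
        rw [hAdef, Finset.card_image_of_injOn hinjIcc, Nat.card_Icc]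
        omega
      have hdisj : Disjoint Gp A := by
        rw [Finset.disjoint_left]
        intro z hzG hzA
        obtain ⟨o, ho, he⟩ := Finset.mem_image.1 hzG
        obtain ⟨o', ho', he'⟩ := Finset.mem_image.1 hzA
        rw [Finset.mem_Ioo] at ho
        rw [Finset.mem_Icc] at ho'
        have : o = o' := st8_cast_inj hk (by omega) (by omega)
          (add_left_cancel (he.trans he'.symm))
        omega
      have hWeq : Gp ∪ A = W := by
        apply Finset.eq_of_subset_of_card_le (Finset.union_subset hGpW hAW)
        rw [Finset.card_union_of_disjoint hdisj, hGpcard, hAcard]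
        omega
      have hnotGA : ∀ o : ℕ, o < 3*k-1 → (0 < o → o < m → False) → (m+k ≤ o → o ≤ 2*k-1 → False) →
          (sigma k p + (o : ZMod (3*k-1))) ∉ W := by
        intro o holt hno1 hno2 hc
        rw [← hWeq, Finset.mem_union] at hc
        rcases hc with hc | hc
        · obtain ⟨o', ho', he⟩ := Finset.mem_image.1 hc
          rw [Finset.mem_Ioo] at ho'
          have : o' = o := st8_cast_inj hk (by omega) (by omega) (add_left_cancel he)
          exact hno1 (by omega) (by omega)
        · obtain ⟨o', ho', he⟩ := Finset.mem_image.1 hc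
          rw [Finset.mem_Icc] at ho'
          have : o' = o := st8_cast_inj hk (by omega) (by omega) (add_left_cancel he)
          exact hno2 (by omega) (by omega)
      have hz1 : (sigma k p + ((k : ℕ) : ZMod (3*k-1))) ∉ W :=
        hnotGA k (by omega) (fun _ h => by omega) (fun h _ => by omega)
      have hz2 : (sigma k p + ((2*k : ℕ) : ZMod (3*k-1))) ∉ W :=
        hnotGA (2*k) (by omega) (fun _ h => by omega) (fun _ h => by omega)
      obtain ⟨r1, hr1⟩ := st8_sigma_surj hk (sigma k p + ((k : ℕ) : ZMod (3*k-1)))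
      obtain ⟨r2, hr2⟩ := st8_sigma_surj hk (sigma k p + ((2*k : ℕ) : ZMod (3*k-1)))
      have hr1S : Sum.inr (Sum.inr r1) ∈ Sᶜ := fun hc => hz1 (by rw [← hr1]; exact (hWpos r1).2 hc)
      have hr2S : Sum.inr (Sum.inr r2) ∈ Sᶜ := fun hc => hz2 (by rw [← hr2]; exact (hWpos r2).2 hc)
      have e1 : (sigma k r1 - sigma k p).val ∈ Finset.Icc k (2*k-1) := by
        rw [hr1, st8_valadd hk _ k (by omega)]
        exact Finset.mem_Icc.2 ⟨le_refl _, by omega⟩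
      have e2 : (sigma k r2 - sigma k r1).val ∈ Finset.Icc k (2*k-1) := by
        rw [hr1, hr2, st8_addsub hk _ _ _ (by omega : k ≤ 2*k)]
        have : 2*k - k = k := by omega
        rw [this, ZMod.val_cast_of_lt (by omega)]
        exact Finset.mem_Icc.2 ⟨le_refl _, by omega⟩
      have e3 : (sigma k q - sigma k r2).val ∈ Finset.Icc k (2*k-1) := by
        have hsum : ((m + k - 1 : ℕ) : ZMod (3*k-1)) + ((2*k : ℕ) : ZMod (3*k-1))
            = ((m : ℕ) : ZMod (3*k-1)) := by
          rw [← Nat.cast_add]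
          have : m + k - 1 + 2*k = m + (3*k-1) := by omega
          rw [this, Nat.cast_add, ZMod.natCast_self, add_zero]
        have he : sigma k q - sigma k r2 = ((m + k - 1 : ℕ) : ZMod (3*k-1)) := by
          rw [hr2, hji]
          rw [← hsum]; ring
        rw [he, ZMod.val_cast_of_lt (by omega)]
        exact Finset.mem_Icc.2 ⟨by omega, by omega⟩
      exact ((st8_step (st8_adj_VV hk p r1 e1) hp hr1S).trans
        (st8_step (st8_adj_VV hk r1 r2 e2) hr1S hr2S)).trans
        (st8_step (st8_adj_VV hk r2 q e3) hr2S hq)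

end
section
variable {k : ℕ}

noncomputable def st8FX (k : ℕ) (S : Set (VC k)) : Finset (Fin (2*k)) :=
  Finset.univ.filter fun x => Sum.inl x ∈ S

noncomputable def st8FU (k : ℕ) (S : Set (VC k)) : Finset (Fin (k+1)) :=
  Finset.univ.filter fun u => Sum.inr (Sum.inl u) ∈ S

lemma st8FX_mem {S : Set (VC k)} {x : Fin (2*k)} : x ∈ st8FX k S ↔ Sum.inl x ∈ S := by
  simp [st8FX]

lemma st8FU_mem {S : Set (VC k)} {u : Fin (k+1)} : u ∈ st8FU k S ↔ Sum.inr (Sum.inl u) ∈ S := by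
  simp [st8FU]

lemma st8_card_split (S : Set (VC k)) :
    (st8FX k S).card + (st8FU k S).card + (st8FV k S).card = S.ncard := by
  classical
  rw [Set.ncard_eq_toFinset_card']
  have h1 : S.toFinset = ((st8FX k S).image Sum.inl) ∪
      ((st8FU k S).image (fun u => Sum.inr (Sum.inl u))) ∪
      ((st8FV k S).image (fun v => Sum.inr (Sum.inr v))) := by
    ext w
    rcases w with x | u | v
    · simp [st8FX]
    · simp [st8FU]
    · simp [st8FV]
  rw [h1]
  rw [Finset.card_union_of_disjoint, Finset.card_union_of_disjoint]
  · rw [Finset.card_image_of_injective _ Sum.inl_injective,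
      Finset.card_image_of_injective _ (fun a b h => by simpa using h),
      Finset.card_image_of_injective _ (fun a b h => by simpa using h)]
  · rw [Finset.disjoint_left]
    intro w hw
    simp only [Finset.mem_image] at hw ⊢
    obtain ⟨x, _, rfl⟩ := hw
    rintro ⟨v, _, h⟩; exact absurd h (by simp)
  · rw [Finset.disjoint_left]
    intro w hw
    simp only [Finset.mem_union, Finset.mem_image] at hw ⊢
    rcases hw with ⟨x, _, rfl⟩ | ⟨u, _, rfl⟩ <;>
      · rintro ⟨v, _, h⟩; exact absurd h (by simp)

lemma st8_pigeon {α β : Type*} [Fintype α] [DecidableEq β] (F : Finset β) (f : α → β)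
    (hf : Function.Injective f) (h : F.card < Fintype.card α) : ∃ a, f a ∉ F := by
  by_contra hc
  push_neg at hc
  have := Finset.card_le_card_of_injOn (s := Finset.univ) f (fun a _ => hc a) hf.injOn
  rw [Finset.card_univ] at this
  omega

lemma st8_card_ge {α β : Type*} [Fintype α] [DecidableEq β] (F : Finset β) (f : α → β)
    (hf : Function.Injective f) (hmem : ∀ a, f a ∈ F) : Fintype.card α ≤ F.card := by
  have := Finset.card_le_card_of_injOn (s := Finset.univ) f (fun a _ => hmem a) hf.injOn
  rwa [Finset.card_univ] at this

/-- pigeonhole for the matched pairs `uᵢ, xᵢ`: if few vertices are deleted among `U` and the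
small half of `X`, some pair survives entirely. -/
lemma st8_pair_pigeon (hk : 2 ≤ k) (S : Set (VC k))
    (h : (st8FU k S).card + ((st8FX k S).filter (fun x => x.val ≤ k)).card < k + 1) :
    ∃ i : Fin (k+1), Sum.inr (Sum.inl i) ∉ S ∧
      Sum.inl (Fin.castLE (by omega : k+1 ≤ 2*k) i) ∉ S := by
  classical
  set bad : Finset (Fin (k+1)) := Finset.univ.filter
    (fun i => Sum.inr (Sum.inl i) ∈ S ∨ Sum.inl (Fin.castLE (by omega : k+1 ≤ 2*k) i) ∈ S)
    with hbad
  have hsub : bad ⊆ (Finset.univ.filter (fun i : Fin (k+1) => Sum.inr (Sum.inl i) ∈ S)) ∪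
      (Finset.univ.filter (fun i : Fin (k+1) =>
        Sum.inl (Fin.castLE (by omega : k+1 ≤ 2*k) i) ∈ S)) := by
    intro i hi
    rw [hbad, Finset.mem_filter] at hi
    rcases hi.2 with h' | h'
    · exact Finset.mem_union_left _ (Finset.mem_filter.2 ⟨Finset.mem_univ _, h'⟩)
    · exact Finset.mem_union_right _ (Finset.mem_filter.2 ⟨Finset.mem_univ _, h'⟩)
  have h2 : (Finset.univ.filter (fun i : Fin (k+1) =>
      Sum.inl (Fin.castLE (by omega : k+1 ≤ 2*k) i) ∈ S)).card ≤
      ((st8FX k S).filter (fun x => x.val ≤ k)).card := by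
    apply Finset.card_le_card_of_injOn (fun i => Fin.castLE (by omega : k+1 ≤ 2*k) i)
    · intro i hi
      rw [Finset.mem_coe, Finset.mem_filter] at hi
      rw [Finset.mem_coe]
      refine Finset.mem_filter.2 ⟨st8FX_mem.2 hi.2, ?_⟩
      simp [Fin.castLE]
      omega
    · intro a _ b _ h
      exact Fin.castLE_injective _ h
  have hbc : bad.card < k + 1 := by
    have := le_trans (Finset.card_le_card hsub) (Finset.card_union_le _ _)
    have hfu : (Finset.univ.filter (fun i : Fin (k+1) => Sum.inr (Sum.inl i) ∈ S)) = st8FU k S := rfl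
    rw [hfu] at this
    omega
  have : ∃ i : Fin (k+1), i ∉ bad := by
    by_contra hc
    push_neg at hc
    have := Finset.card_le_card (fun i _ => hc i : Finset.univ ⊆ bad)
    rw [Finset.card_univ, Fintype.card_fin] at this
    omega
  obtain ⟨i, hi⟩ := this
  rw [hbad, Finset.mem_filter] at hi
  push_neg at hi
  exact ⟨i, (hi (Finset.mem_univ _)).1, (hi (Finset.mem_univ _)).2⟩

end
section
variable {k : ℕ}

/-- a surviving small `X`-vertex reaches a surviving `V`-vertex directly. -/
lemma st8_smallX_reach (hk : 2 ≤ k) (S : Set (VC k)) (hV : (st8FV k S).card ≤ k - 1)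
    (x : Fin (2*k)) (hx : x.val ≤ k) (hxS : Sum.inl x ∈ Sᶜ) :
    ∃ (r : Fin (3*k-1)) (hr : Sum.inr (Sum.inr r) ∈ Sᶜ),
      ((Gamma k).induce Sᶜ).Reachable ⟨Sum.inl x, hxS⟩ ⟨Sum.inr (Sum.inr r), hr⟩ := by
  classical
  set f : Fin k → Fin (3*k-1) := fun a =>
    if a.val < x.val then ⟨a.val, by omega⟩ else ⟨a.val + 1, by omega⟩ with hf
  have hinj : Function.Injective f := by
    intro a b h
    simp only [hf] at h
    split_ifs at h <;> (rw [Fin.mk.injEq] at h; exact Fin.ext (by omega))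
  obtain ⟨a, ha⟩ := st8_pigeon (st8FV k S) f hinj (by simpa using by omega : _)
  have hr : Sum.inr (Sum.inr (f a)) ∈ Sᶜ := fun h => ha (st8FV_mem.2 h)
  have hfv : (f a).val ≤ k ∧ (f a).val ≠ x.val := by
    by_cases hc : a.val < x.val
    · simp only [hf, if_pos hc]; exact ⟨by omega, by omega⟩
    · simp only [hf, if_neg hc]; exact ⟨by omega, by omega⟩
  have hM : MRel k x (f a) := by
    rw [MRel, if_pos hfv.1]
    rintro (h | h) <;> omega
  exact ⟨f a, hr, st8_step (st8_adj_XV x (f a) hM) hxS hr⟩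

/-- a surviving big `X`-vertex reaches a surviving `V`-vertex. -/
lemma st8_bigX_reach (hk : 2 ≤ k) (S : Set (VC k)) (hS : S.ncard < 2*k)
    (hV : (st8FV k S).card ≤ k - 1)
    (x : Fin (2*k)) (hx : k+1 ≤ x.val) (hxS : Sum.inl x ∈ Sᶜ) :
    ∃ (r : Fin (3*k-1)) (hr : Sum.inr (Sum.inr r) ∈ Sᶜ),
      ((Gamma k).induce Sᶜ).Reachable ⟨Sum.inl x, hxS⟩ ⟨Sum.inr (Sum.inr r), hr⟩ := by
  classical
  by_cases hT : ∃ r : Fin (3*k-1), k+1 ≤ r.val ∧ r.val ≤ 2*k-1 ∧ Sum.inr (Sum.inr r) ∉ S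
  · obtain ⟨r, hr1, hr2, hr3⟩ := hT
    have hM : MRel k x r := by
      rw [MRel, if_neg (by omega), if_pos hr2]
      omega
    exact ⟨r, hr3, st8_step (st8_adj_XV x r hM) hxS hr3⟩
  · push_neg at hT
    have hVge : k - 1 ≤ (st8FV k S).card := by
      have := st8_card_ge (st8FV k S) (fun a : Fin (k-1) => (⟨k+1+a.val, by omega⟩ : Fin (3*k-1)))
        (fun a b h => by
          rw [Fin.mk.injEq] at h
          exact Fin.ext (by omega))
        (fun a => st8FV_mem.2 (hT _ (by show k+1 ≤ k+1+a.val; omega)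
          (by have := a.isLt; show k+1+a.val ≤ 2*k-1; omega)))
      simpa using this
    have hsplit := st8_card_split S
    have hpair : (st8FU k S).card + ((st8FX k S).filter (fun x => x.val ≤ k)).card < k + 1 := by
      have := Finset.card_filter_le (st8FX k S) (fun x => x.val ≤ k)
      omega
    obtain ⟨i, hui, hxi⟩ := st8_pair_pigeon hk S hpair
    have hN1 : NRel k x i := Or.inr hx
    have hN2 : NRel k (Fin.castLE (by omega : k+1 ≤ 2*k) i) i := Or.inl (by simp)
    obtain ⟨r, hr, hreach⟩ := st8_smallX_reach hk S hV (Fin.castLE (by omega) i) (by simp; omega) hxi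
    exact ⟨r, hr, ((st8_step (st8_adj_XU x i hN1) hxS hui).trans
      (st8_step (st8_adj_XU _ i hN2) hxi hui).symm).trans hreach⟩

/-- a surviving `U`-vertex reaches a surviving `V`-vertex. -/
lemma st8_U_reach (hk : 2 ≤ k) (S : Set (VC k)) (hS : S.ncard < 2*k)
    (hV : (st8FV k S).card ≤ k - 1)
    (u : Fin (k+1)) (huS : Sum.inr (Sum.inl u) ∈ Sᶜ) :
    ∃ (r : Fin (3*k-1)) (hr : Sum.inr (Sum.inr r) ∈ Sᶜ),
      ((Gamma k).induce Sᶜ).Reachable ⟨Sum.inr (Sum.inl u), huS⟩ ⟨Sum.inr (Sum.inr r), hr⟩ := by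
  classical
  by_cases hxu : Sum.inl (Fin.castLE (by omega : k+1 ≤ 2*k) u) ∈ Sᶜ
  · obtain ⟨r, hr, hreach⟩ := st8_smallX_reach hk S hV _ (by simp; omega) hxu
    have hN : NRel k (Fin.castLE (by omega : k+1 ≤ 2*k) u) u := Or.inl (by simp)
    exact ⟨r, hr, (st8_step (st8_adj_XU _ u hN) hxu huS).symm.trans hreach⟩
  · by_cases hbg : ∃ xb : Fin (2*k), k+1 ≤ xb.val ∧ Sum.inl xb ∈ Sᶜ
    · obtain ⟨xb, hxb1, hxb2⟩ := hbg
      obtain ⟨r, hr, hreach⟩ := st8_bigX_reach hk S hS hV xb hxb1 hxb2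
      exact ⟨r, hr, (st8_step (st8_adj_XU xb u (Or.inr hxb1)) hxb2 huS).symm.trans hreach⟩
    · push_neg at hbg
      have hxu' : Sum.inl (Fin.castLE (by omega : k+1 ≤ 2*k) u) ∈ S := by
        by_contra hc; exact hxu hc
      -- all big X deleted
      have hbig : k - 1 ≤ ((st8FX k S).filter (fun x => ¬ x.val ≤ k)).card := by
        have := st8_card_ge ((st8FX k S).filter (fun x => ¬ x.val ≤ k))
          (fun a : Fin (k-1) => (⟨k+1+a.val, by omega⟩ : Fin (2*k)))
          (fun a b h => by
            rw [Fin.mk.injEq] at h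
            exact Fin.ext (by omega))
          (fun a => Finset.mem_filter.2 ⟨st8FX_mem.2 (by
              have := hbg (⟨k+1+a.val, by have := a.isLt; omega⟩ : Fin (2*k))
                (by show k+1 ≤ k+1+a.val; omega)
              simpa using this),
            by have := a.isLt; show ¬(k+1+a.val ≤ k); omega⟩)
        simpa using this
      have hsplit := st8_card_split S
      have hfsplit := Finset.card_filter_add_card_filter_not
        (s := st8FX k S) (p := fun x => x.val ≤ k)
      have hpair : (st8FU k S).card + ((st8FX k S).filter (fun x => x.val ≤ k)).card < k + 1 := by
        omega
      obtain ⟨i, hui, hxi⟩ := st8_pair_pigeon hk S hpair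
      have hne : u ≠ i := by
        rintro rfl; exact hxi hxu'
      obtain ⟨r, hr, hreach⟩ := st8_smallX_reach hk S hV (Fin.castLE (by omega) i) (by simp; omega) hxi
      have hN2 : NRel k (Fin.castLE (by omega : k+1 ≤ 2*k) i) i := Or.inl (by simp)
      exact ⟨r, hr, ((st8_step (st8_adj_UU u i hne) huS hui).trans
        (st8_step (st8_adj_XU _ i hN2) hxi hui).symm).trans hreach⟩

lemma st8_caseI (hk : 2 ≤ k) (S : Set (VC k)) (hS : S.ncard < 2*k)
    (hV : (st8FV k S).card ≤ k - 1) : ((Gamma k).induce Sᶜ).Connected := by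
  classical
  have key : ∀ w : ↥Sᶜ, ∃ (r : Fin (3*k-1)) (hr : Sum.inr (Sum.inr r) ∈ Sᶜ),
      ((Gamma k).induce Sᶜ).Reachable w ⟨Sum.inr (Sum.inr r), hr⟩ := by
    rintro ⟨w, hw⟩
    rcases w with x | u | v
    · by_cases hx : x.val ≤ k
      · exact st8_smallX_reach hk S hV x hx hw
      · exact st8_bigX_reach hk S hS hV x (by omega) hw
    · exact st8_U_reach hk S hS hV u hw
    · exact ⟨v, hw, SimpleGraph.Reachable.refl _⟩
  have hne : Nonempty ↥Sᶜ := by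
    obtain ⟨r, hr⟩ := st8_pigeon (st8FV k S) (id : Fin (3*k-1) → Fin (3*k-1))
      (fun a b h => h) (by simp; omega)
    exact ⟨⟨Sum.inr (Sum.inr r), fun h => hr (st8FV_mem.2 h)⟩⟩
  rw [SimpleGraph.connected_iff]
  refine ⟨fun a b => ?_, hne⟩
  obtain ⟨ra, hra, hha⟩ := key a
  obtain ⟨rb, hrb, hhb⟩ := key b
  exact (hha.trans (st8_reachV hk S hV _ ra rb hra hrb rfl)).trans hhb.symm

end
section
variable {k : ℕ}

/-- In Case II, along any injective family of `k` vertices of `X` there is a surviving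
"non-orphan" one. -/
lemma st8_goodX (hk : 2 ≤ k) (S : Set (VC k))
    (hXU : (st8FX k S).card + (st8FU k S).card ≤ k - 1)
    (g : Fin k → Fin (2*k)) (hg : Function.Injective g) :
    ∃ a, Sum.inl (g a) ∈ Sᶜ ∧ (k+1 ≤ (g a).val ∨
      ∃ u : Fin (k+1), u.val = (g a).val ∧ Sum.inr (Sum.inl u) ∈ Sᶜ) := by
  classical
  set T : Finset (Fin (2*k)) :=
    st8FX k S ∪ (st8FU k S).image (Fin.castLE (by omega : k+1 ≤ 2*k)) with hT
  have hTcard : T.card < k := by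
    rw [hT]
    have h1 := Finset.card_union_le (st8FX k S)
      ((st8FU k S).image (Fin.castLE (by omega : k+1 ≤ 2*k)))
    have h2 := Finset.card_image_le (s := st8FU k S)
      (f := Fin.castLE (by omega : k+1 ≤ 2*k))
    omega
  obtain ⟨a, ha⟩ := st8_pigeon T g hg (by simpa using hTcard)
  refine ⟨a, ?_, ?_⟩
  · intro h
    exact ha (Finset.mem_union_left _ (st8FX_mem.2 h))
  · by_cases hbig : k+1 ≤ (g a).val
    · exact Or.inl hbig
    · refine Or.inr ⟨⟨(g a).val, by omega⟩, rfl, ?_⟩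
      intro h
      refine ha (Finset.mem_union_right _ (Finset.mem_image.2
        ⟨⟨(g a).val, by omega⟩, st8FU_mem.2 h, ?_⟩))
      apply Fin.ext
      simp

lemma st8_caseII (hk : 2 ≤ k) (S : Set (VC k)) (hS : S.ncard < 2*k)
    (hV2 : k ≤ (st8FV k S).card) : ((Gamma k).induce Sᶜ).Connected := by
  classical
  have hsplit := st8_card_split S
  have hXU : (st8FX k S).card + (st8FU k S).card ≤ k - 1 := by omega
  obtain ⟨u0, hu0⟩ := st8_pigeon (st8FU k S) (id : Fin (k+1) → Fin (k+1))
    (fun a b h => h) (by simp; omega)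
  have hu0S : Sum.inr (Sum.inl u0) ∈ Sᶜ := fun h => hu0 (st8FU_mem.2 h)
  have reachU : ∀ (u : Fin (k+1)) (hu : Sum.inr (Sum.inl u) ∈ Sᶜ),
      ((Gamma k).induce Sᶜ).Reachable ⟨Sum.inr (Sum.inl u), hu⟩ ⟨Sum.inr (Sum.inl u0), hu0S⟩ := by
    intro u hu
    by_cases h : u = u0
    · subst h; exact SimpleGraph.Reachable.refl _
    · exact st8_step (st8_adj_UU u u0 h) hu hu0S
  have reachX : ∀ (x : Fin (2*k)) (hx : Sum.inl x ∈ Sᶜ),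
      (k+1 ≤ x.val ∨ ∃ u : Fin (k+1), u.val = x.val ∧ Sum.inr (Sum.inl u) ∈ Sᶜ) →
      ((Gamma k).induce Sᶜ).Reachable ⟨Sum.inl x, hx⟩ ⟨Sum.inr (Sum.inl u0), hu0S⟩ := by
    intro x hx h
    rcases h with h | ⟨u, huv, hu⟩
    · exact st8_step (st8_adj_XU x u0 (Or.inr h)) hx hu0S
    · have hN : NRel k x u := Or.inl huv.symm
      exact (st8_step (st8_adj_XU x u hN) hx hu).trans (reachU u hu)
  have reachVU : ∀ (v : Fin (3*k-1)) (hv : Sum.inr (Sum.inr v) ∈ Sᶜ),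
      ((Gamma k).induce Sᶜ).Reachable ⟨Sum.inr (Sum.inr v), hv⟩ ⟨Sum.inr (Sum.inl u0), hu0S⟩ := by
    intro v hv
    by_cases hb1 : v.val ≤ k
    · set g : Fin k → Fin (2*k) := fun a =>
        if a.val < v.val then ⟨a.val, by have := a.isLt; omega⟩
        else ⟨a.val+1, by have := a.isLt; omega⟩ with hg
      have hginj : Function.Injective g := by
        intro a b h
        simp only [hg] at h
        split_ifs at h <;> (rw [Fin.mk.injEq] at h; exact Fin.ext (by omega))
      obtain ⟨a, hga, hgood⟩ := st8_goodX hk S hXU g hginj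
      have hval : (g a).val ≤ k ∧ (g a).val ≠ v.val := by
        by_cases hc : a.val < v.val
        · simp only [hg, if_pos hc]; exact ⟨by have := a.isLt; omega, by omega⟩
        · simp only [hg, if_neg hc]; exact ⟨by have := a.isLt; omega, by omega⟩
      have hM : MRel k (g a) v := by
        rw [MRel, if_pos hb1]
        rintro (h | h) <;> omega
      exact (st8_step (st8_adj_XV (g a) v hM) hga hv).symm.trans (reachX _ hga hgood)
    · by_cases hb2 : v.val ≤ 2*k-1
      · set g : Fin k → Fin (2*k) := fun a => ⟨k + a.val, by have := a.isLt; omega⟩ with hg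
        have hginj : Function.Injective g := by
          intro a b h
          simp only [hg] at h
          rw [Fin.mk.injEq] at h
          exact Fin.ext (by omega)
        obtain ⟨a, hga, hgood⟩ := st8_goodX hk S hXU g hginj
        have hM : MRel k (g a) v := by
          rw [MRel, if_neg (by omega), if_pos hb2]
          show k ≤ k + a.val
          omega
        exact (st8_step (st8_adj_XV (g a) v hM) hga hv).symm.trans (reachX _ hga hgood)
      · set g : Fin k → Fin (2*k) := fun a => ⟨a.val, by have := a.isLt; omega⟩ with hg
        have hginj : Function.Injective g := by
          intro a b h
          simp only [hg] at h
          rw [Fin.mk.injEq] at h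
          exact Fin.ext (by omega)
        obtain ⟨a, hga, hgood⟩ := st8_goodX hk S hXU g hginj
        have hM : MRel k (g a) v := by
          rw [MRel, if_neg (by omega), if_neg (by omega)]
          show (g a).val < k
          simp only [hg]
          have := a.isLt; omega
        exact (st8_step (st8_adj_XV (g a) v hM) hga hv).symm.trans (reachX _ hga hgood)
  rw [SimpleGraph.connected_iff]
  refine ⟨fun a b => ?_, ⟨⟨Sum.inr (Sum.inl u0), hu0S⟩⟩⟩
  suffices key : ∀ w : ↥Sᶜ, ((Gamma k).induce Sᶜ).Reachable w ⟨Sum.inr (Sum.inl u0), hu0S⟩ by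
    exact (key a).trans (key b).symm
  rintro ⟨w, hw⟩
  rcases w with x | u | v
  · by_cases hbig : k+1 ≤ x.val
    · exact reachX x hw (Or.inl hbig)
    · by_cases hux : ∃ u : Fin (k+1), u.val = x.val ∧ Sum.inr (Sum.inl u) ∈ Sᶜ
      · exact reachX x hw (Or.inr hux)
      · -- `x` is an orphan: its matched `U`-vertex is deleted; go through `V`.
        have hxs : x.val ≤ k := by omega
        push_neg at hux
        have hFU1 : 1 ≤ (st8FU k S).card := by
          refine Finset.card_pos.2 ⟨⟨x.val, by omega⟩, st8FU_mem.2 ?_⟩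
          have := hux ⟨x.val, by omega⟩ rfl
          simpa using this
        have hVle : (st8FV k S).card ≤ 2*k-2 := by omega
        set g2 : Fin (2*k-1) → Fin (3*k-1) := fun a =>
          if a.val < k then
            (if a.val < x.val then ⟨a.val, by have := a.isLt; omega⟩
              else ⟨a.val+1, by have := a.isLt; omega⟩)
          else
            (if x.val < k then ⟨a.val + k, by have := a.isLt; omega⟩
              else ⟨a.val + 1, by have := a.isLt; omega⟩) with hg2
        have hginj : Function.Injective g2 := by
          intro a b h
          have ha := a.isLt
          have hb := b.isLt
          simp only [hg2] at h
          split_ifs at h <;> (rw [Fin.mk.injEq] at h; exact Fin.ext (by omega))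
        obtain ⟨a, ha⟩ := st8_pigeon (st8FV k S) g2 hginj (by simp; omega)
        have hr : Sum.inr (Sum.inr (g2 a)) ∈ Sᶜ := fun h => ha (st8FV_mem.2 h)
        have hM : MRel k x (g2 a) := by
          by_cases hc : a.val < k
          · have hval : (g2 a).val ≤ k ∧ (g2 a).val ≠ x.val := by
              by_cases hc2 : a.val < x.val
              · simp only [hg2, if_pos hc, if_pos hc2]; exact ⟨by omega, by omega⟩
              · simp only [hg2, if_pos hc, if_neg hc2]; exact ⟨by omega, by omega⟩
            rw [MRel, if_pos hval.1]
            rintro (h | h) <;> omega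
          · by_cases hc2 : x.val < k
            · have hval : (g2 a).val = a.val + k := by simp only [hg2, if_neg hc, if_pos hc2]
              rw [MRel, if_neg (by omega), if_neg (by have := a.isLt; omega)]
              omega
            · have hval : (g2 a).val = a.val + 1 := by simp only [hg2, if_neg hc, if_neg hc2]
              rw [MRel, if_neg (by omega), if_pos (by have := a.isLt; omega)]
              omega
        exact (st8_step (st8_adj_XV x (g2 a) hM) hw hr).trans (reachVU _ hr)
  · exact reachU u hw
  · exact reachVU v hw

end
section
variable {k : ℕ}

lemma st8_upper (hk : 2 ≤ k) :
    ∃ S : Set (VC k), S.ncard = 2*k ∧ ¬((Gamma k).induce Sᶜ).Connected := by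
  classical
  refine ⟨Set.range Sum.inl, ?_, ?_⟩
  · rw [← Set.image_univ, Set.ncard_image_of_injective _ Sum.inl_injective, Set.ncard_univ]
    simp [Nat.card_eq_fintype_card]
  · intro hcon
    have ha : (Sum.inr (Sum.inl (⟨0, by omega⟩ : Fin (k+1))) : VC k) ∈
        (Set.range (Sum.inl : Fin (2*k) → VC k))ᶜ := by simp
    have hb : (Sum.inr (Sum.inr (⟨0, by omega⟩ : Fin (3*k-1))) : VC k) ∈
        (Set.range (Sum.inl : Fin (2*k) → VC k))ᶜ := by simp
    have hreach := hcon.preconnected ⟨_, ha⟩ ⟨_, hb⟩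
    set f : ↥(Set.range (Sum.inl : Fin (2*k) → VC k))ᶜ → Bool := fun w =>
      match w.1 with
      | Sum.inr (Sum.inl _) => true
      | _ => false with hf
    have hadj : ∀ x y, ((Gamma k).induce (Set.range (Sum.inl : Fin (2*k) → VC k))ᶜ).Adj x y →
        f x = f y := by
      rintro ⟨x1, hx⟩ ⟨y1, hy⟩ hxy
      have hGxy : (Gamma k).Adj x1 y1 := hxy
      rw [Gamma, SimpleGraph.fromRel_adj] at hGxy
      rcases x1 with x | u | v
      · exact absurd (Set.mem_range_self x) hx
      · rcases y1 with x' | u' | v'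
        · exact absurd (Set.mem_range_self x') hy
        · rfl
        · rcases hGxy.2 with h | h <;> exact h.elim
      · rcases y1 with x' | u' | v'
        · exact absurd (Set.mem_range_self x') hy
        · rcases hGxy.2 with h | h <;> exact h.elim
        · rfl
    have hwalk : ∀ (x y : ↥(Set.range (Sum.inl : Fin (2*k) → VC k))ᶜ)
        (w : ((Gamma k).induce (Set.range (Sum.inl : Fin (2*k) → VC k))ᶜ).Walk x y),
        f x = f y := by
      intro x y w
      induction w with
      | nil => rfl
      | cons h p ih => exact (hadj _ _ h).trans ih
    obtain ⟨w⟩ := hreach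
    have := hwalk _ _ w
    simp only [hf] at this
    exact absurd this (by simp)

end

/-- For every `k ≥ 2`, the graph `Γ` has vertex-connectivity exactly `2k`. -/
theorem stmt8 (k : ℕ) (hk : 2 ≤ k) :
    HasVertexConnectivity (Gamma k) (2 * k) := by
  constructor
  · exact st8_upper hk
  · intro S hS
    by_cases hV : (st8FV k S).card ≤ k - 1
    · exact st8_caseI hk S hS hV
    · exact st8_caseII hk S hS (by omega)
end

section
/- If Γ and Γ' are k-regular finite simple graphs that are cospectral with respect to the adjacency matrix, then their line graphs L(Γ) and L(Γ') are (2k−2)-regular and are cospectral with respect to the adjacency matrix. -/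
open scoped Classical

section Aux
set_option linter.unnecessarySeqFocus false
set_option linter.unusedTactic false
open Polynomial Matrix Finset

variable {R : Type*} [CommRing R]

lemma charmatrix_eq {p : Type*} [Fintype p] [DecidableEq p] (M : Matrix p p R) :
    charmatrix M = (X : R[X]) • (1 : Matrix p p R[X]) - M.map C := by
  ext i j
  by_cases h : i = j
  · subst h; simp [charmatrix_apply_eq]
  · simp [charmatrix_apply_ne _ _ _ h, Matrix.one_apply_ne h]

lemma charpoly_mul_X_pow {p q : Type*} [Fintype p] [DecidableEq p] [Fintype q] [DecidableEq q]
    (B : Matrix p q R) (C' : Matrix q p R) :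
    (B * C').charpoly * X ^ (Fintype.card q) = (C' * B).charpoly * X ^ (Fintype.card p) := by
  classical
  set Bp := B.map (Polynomial.C : R →+* R[X]) with hBp
  set Cp := C'.map (Polynomial.C : R →+* R[X]) with hCp
  set x : R[X] := X with hx
  set N : Matrix (p ⊕ q) (p ⊕ q) R[X] := fromBlocks (x • 1) Bp (x • Cp) (x • 1) with hN
  set E : Matrix (p ⊕ q) (p ⊕ q) R[X] := fromBlocks 1 0 (-Cp) 1 with hE
  have hdetE : E.det = 1 := by
    rw [hE, det_fromBlocks_zero₁₂]; simp
  have h1 : N * E = fromBlocks (x • 1 - Bp * Cp) Bp 0 (x • 1) := by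
    rw [hN, hE, fromBlocks_multiply]
    congr 1 <;> simp [Matrix.mul_smul, Matrix.smul_mul, sub_eq_add_neg]
  have h2 : E * N = fromBlocks (x • 1) Bp 0 (x • 1 - Cp * Bp) := by
    rw [hN, hE, fromBlocks_multiply]
    congr 1 <;> simp [Matrix.mul_smul, Matrix.smul_mul, sub_eq_add_neg] <;> abel
  have hdet1 : N.det = (x • 1 - Bp * Cp).det * x ^ Fintype.card q := by
    have := congrArg Matrix.det h1
    rw [det_mul, hdetE, mul_one] at this
    rw [this, det_fromBlocks_zero₂₁, det_smul, det_one, mul_one]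
  have hdet2 : N.det = x ^ Fintype.card p * (x • 1 - Cp * Bp).det := by
    have := congrArg Matrix.det h2
    rw [det_mul, hdetE, one_mul] at this
    rw [this, det_fromBlocks_zero₂₁, det_smul, det_one, mul_one]
  have e1 : (B * C').charpoly = (x • 1 - Bp * Cp).det := by
    rw [Matrix.charpoly, charmatrix_eq, Matrix.map_mul]
  have e2 : (C' * B).charpoly = (x • 1 - Cp * Bp).det := by
    rw [Matrix.charpoly, charmatrix_eq, Matrix.map_mul]
  rw [e1, e2, ← hdet1, hdet2, mul_comm]


lemma charpoly_add_smul_one {p : Type*} [Fintype p] [DecidableEq p] (M : Matrix p p R) (c : R) :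
    (M + c • 1).charpoly = M.charpoly.comp (X - C c) := by
  classical
  have h1 : M.charpoly.comp (X - C c)
      = ((charmatrix M).map (eval₂RingHom C (X - C c))).det := by
    have := (eval₂RingHom C (X - C c : R[X])).map_det (charmatrix M)
    rw [Matrix.charpoly]
    rw [RingHom.mapMatrix_apply] at this
    rw [← this]
    simp [Polynomial.comp]
  have h2 : (charmatrix M).map (eval₂RingHom C (X - C c)) = charmatrix (M + c • 1) := by
    ext i j
    by_cases h : i = j
    · subst h
      simp [charmatrix_apply_eq, Matrix.one_apply, sub_sub, add_comm]
    · simp [charmatrix_apply_ne _ _ _ h, Matrix.one_apply_ne h]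
  rw [h1, h2, Matrix.charpoly]


variable {V : Type*} [Fintype V] [DecidableEq V] (G : SimpleGraph V)

noncomputable def IncB (G : SimpleGraph V) : Matrix V G.edgeSet ℤ :=
  fun v e => G.incMatrix ℤ v (e : Sym2 V)

omit [DecidableEq V] in
lemma degree_eq_of_reg {k : ℕ} (hreg : IsRegularGraph G k) (v : V) : G.degree v = k := by
  rw [← hreg v, SimpleGraph.degree, SimpleGraph.neighborFinset_def,
    Set.ncard_eq_toFinset_card']

omit [DecidableEq V] in
lemma sum_edgeSet (g : Sym2 V → ℤ) (h0 : ∀ e ∉ G.edgeSet, g e = 0) :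
    ∑ e : G.edgeSet, g (e : Sym2 V) = ∑ e : Sym2 V, g e := by
  rw [Finset.sum_set_coe]
  exact Finset.sum_subset (Finset.subset_univ _) (fun e _ he => h0 e (by simpa using he))

lemma lemA {k : ℕ} (hreg : IsRegularGraph G k) :
    IncB G * (IncB G)ᵀ = G.adjMatrix ℤ + (k : ℤ) • 1 := by
  ext a b
  have h1 : (IncB G * (IncB G)ᵀ) a b = (G.incMatrix ℤ * (G.incMatrix ℤ)ᵀ) a b := by
    rw [Matrix.mul_apply, Matrix.mul_apply]
    exact sum_edgeSet G (fun e => G.incMatrix ℤ a e * G.incMatrix ℤ b e)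
      (fun e he => by
        show G.incMatrix ℤ a e * G.incMatrix ℤ b e = 0
        rw [G.incMatrix_of_notMem_incidenceSet (a := a) (fun h => he h.1), zero_mul])
  rw [h1, SimpleGraph.incMatrix_mul_transpose, Matrix.add_apply, Matrix.smul_apply,
    smul_eq_mul]
  by_cases h : a = b
  · subst h
    simp [degree_eq_of_reg G hreg, Matrix.one_apply]
  · by_cases hadj : G.Adj a b <;> simp [h, hadj, Matrix.one_apply_ne h]

lemma lemB : (IncB G)ᵀ * IncB G = (G.lineGraph).adjMatrix ℤ + (2 : ℤ) • 1 := by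
  ext e f
  rw [Matrix.mul_apply, Matrix.add_apply, Matrix.smul_apply, smul_eq_mul]
  simp only [Matrix.transpose_apply, IncB]
  by_cases hef : e = f
  · subst hef
    have sq : ∀ v, G.incMatrix ℤ v ↑e * G.incMatrix ℤ v ↑e = G.incMatrix ℤ v ↑e := by
      intro v
      by_cases h : (↑e ∈ G.incidenceSet v)
      · rw [G.incMatrix_of_mem_incidenceSet h]; ring
      · rw [G.incMatrix_of_notMem_incidenceSet h]; ring
    rw [Finset.sum_congr rfl (fun v _ => sq v), G.sum_incMatrix_apply_of_mem_edgeSet e.2]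
    simp [Matrix.one_apply]
  · have hcoe : (e : Sym2 V) ≠ (f : Sym2 V) := fun h => hef (Subtype.ext h)
    have huniq : ∀ v w : V, v ∈ (e : Sym2 V) → v ∈ (f : Sym2 V) → w ∈ (e : Sym2 V) →
        w ∈ (f : Sym2 V) → v = w := by
      intro v w hv hv' hw hw'
      by_contra hne
      exact hcoe (((Sym2.mem_and_mem_iff hne).mp ⟨hv, hw⟩).trans
        ((Sym2.mem_and_mem_iff hne).mp ⟨hv', hw'⟩).symm)
    have hstep : ∀ v, G.incMatrix ℤ v ↑e * G.incMatrix ℤ v ↑f =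
        if v ∈ (e : Sym2 V) ∧ v ∈ (f : Sym2 V) then 1 else 0 := by
      intro v
      have h1 : G.incMatrix ℤ v ↑e = if v ∈ (e : Sym2 V) then 1 else 0 := by
        by_cases h : v ∈ (e : Sym2 V)
        · rw [if_pos h]; exact G.incMatrix_of_mem_incidenceSet ⟨e.2, h⟩
        · rw [if_neg h]; exact G.incMatrix_of_notMem_incidenceSet (fun hh => h hh.2)
      have h2 : G.incMatrix ℤ v ↑f = if v ∈ (f : Sym2 V) then 1 else 0 := by
        by_cases h : v ∈ (f : Sym2 V)
        · rw [if_pos h]; exact G.incMatrix_of_mem_incidenceSet ⟨f.2, h⟩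
        · rw [if_neg h]; exact G.incMatrix_of_notMem_incidenceSet (fun hh => h hh.2)
      rw [h1, h2]
      by_cases hv : v ∈ (e : Sym2 V) <;> by_cases hw : v ∈ (f : Sym2 V) <;>
        simp [hv, hw]
    rw [Finset.sum_congr rfl (fun v _ => hstep v)]
    rw [Matrix.one_apply_ne hef, mul_zero, add_zero]
    by_cases hadj : G.lineGraph.Adj e f
    · obtain ⟨-, v₀, hv₀e, hv₀f⟩ := SimpleGraph.lineGraph_adj_iff_exists.mp hadj
      have hfilter : (Finset.univ.filter
          (fun v => v ∈ (e : Sym2 V) ∧ v ∈ (f : Sym2 V))) = {v₀} := by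
        ext v
        simp only [Finset.mem_filter, Finset.mem_univ, true_and, Finset.mem_singleton]
        constructor
        · rintro ⟨h1, h2⟩; exact huniq v v₀ h1 h2 hv₀e hv₀f
        · rintro rfl; exact ⟨hv₀e, hv₀f⟩
      rw [Finset.sum_ite, hfilter]
      simp [hadj]
    · have hempty : ∀ v, ¬(v ∈ (e : Sym2 V) ∧ v ∈ (f : Sym2 V)) := by
        rintro v ⟨h1, h2⟩
        exact hadj (SimpleGraph.lineGraph_adj_iff_exists.mpr ⟨hef, v, h1, h2⟩)
      simp [hempty, hadj]

lemma lineReg {k : ℕ} (hreg : IsRegularGraph G k) :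
    IsRegularGraph G.lineGraph (2 * k - 2) := by
  intro e
  have hk : 1 ≤ k := by
    obtain ⟨u, v, huv⟩ := Sym2.exists.mp ⟨e.1, rfl⟩
    have hadj : G.Adj u v := by
      have := e.2; rw [huv] at this; exact G.mem_edgeSet.mp this
    rw [← hreg u]
    exact Set.ncard_pos (Set.toFinite _) |>.mpr ⟨v, hadj⟩
  -- row sum computation
  have hrow : ∑ f : G.edgeSet, ((IncB G)ᵀ * IncB G) e f = 2 * (k : ℤ) := by
    simp only [Matrix.mul_apply, Matrix.transpose_apply]
    rw [Finset.sum_comm]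
    have hv : ∀ v : V, ∑ f : G.edgeSet, IncB G v e * IncB G v f
        = IncB G v e * (k : ℤ) := by
      intro v
      rw [← Finset.mul_sum]
      congr 1
      have := sum_edgeSet G (fun f => G.incMatrix ℤ v f)
        (fun f hf => G.incMatrix_of_notMem_incidenceSet (fun h => hf h.1))
      simp only [IncB]
      rw [this, G.sum_incMatrix_apply, degree_eq_of_reg G hreg]
      
    rw [Finset.sum_congr rfl (fun v _ => hv v), ← Finset.sum_mul]
    have : ∑ v : V, IncB G v e = 2 := G.sum_incMatrix_apply_of_mem_edgeSet e.2
    rw [this]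
  rw [lemB] at hrow
  have hadjsum : ∑ f : G.edgeSet, (G.lineGraph).adjMatrix ℤ e f
      = (G.lineGraph.degree e : ℤ) := by
    simp only [SimpleGraph.adjMatrix_apply, Finset.sum_boole]
    rw [SimpleGraph.degree, SimpleGraph.neighborFinset_eq_filter]
  have hid : ∑ f : G.edgeSet, ((2 : ℤ) • (1 : Matrix G.edgeSet G.edgeSet ℤ)) e f = 2 := by
    simp [Matrix.one_apply]
  rw [Finset.sum_congr rfl (fun f _ => Matrix.add_apply _ _ e f), Finset.sum_add_distrib,
    hadjsum, hid] at hrow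
  have hdeg : G.lineGraph.degree e = 2 * k - 2 := by omega
  rw [← hdeg, SimpleGraph.degree, SimpleGraph.neighborFinset_def,
    Set.ncard_eq_toFinset_card']

lemma master {k : ℕ} (hreg : IsRegularGraph G k) :
    (G.lineGraph.adjMatrix ℤ).charpoly * (X + C 2) ^ (Fintype.card V)
      = (G.adjMatrix ℤ).charpoly.comp (X + C 2 - C (k : ℤ))
        * (X + C 2) ^ (Fintype.card G.edgeSet) := by
  have h := charpoly_mul_X_pow (IncB G) (IncB G)ᵀ
  rw [lemA G hreg, lemB G, charpoly_add_smul_one, charpoly_add_smul_one] at h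
  have h2 := congrArg (fun q => q.comp (X + C (2 : ℤ))) h
  simp only [mul_comp, pow_comp, X_comp, comp_assoc, sub_comp, C_comp,
    add_sub_cancel_right, comp_X] at h2
  exact h2.symm

theorem stmt14' {V W : Type*} [Fintype V] [DecidableEq V] [Fintype W] [DecidableEq W]
    (k : ℕ) (Γ : SimpleGraph V) (Γ' : SimpleGraph W)
    (hreg : IsRegularGraph Γ k) (hreg' : IsRegularGraph Γ' k)
    (hcos : (Γ.adjMatrix ℤ).charpoly = (Γ'.adjMatrix ℤ).charpoly) :
    IsRegularGraph Γ.lineGraph (2 * k - 2) ∧ IsRegularGraph Γ'.lineGraph (2 * k - 2) ∧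
      (Γ.lineGraph.adjMatrix ℤ).charpoly = (Γ'.lineGraph.adjMatrix ℤ).charpoly := by
  refine ⟨lineReg Γ hreg, lineReg Γ' hreg', ?_⟩
  have hn : Fintype.card V = Fintype.card W := by
    have h1 := Matrix.charpoly_natDegree_eq_dim (Γ.adjMatrix ℤ)
    have h2 := Matrix.charpoly_natDegree_eq_dim (Γ'.adjMatrix ℤ)
    rw [hcos] at h1
    exact h1.symm.trans h2
  have hm : Fintype.card Γ.edgeSet = Fintype.card Γ'.edgeSet := by
    have d1 := Γ.sum_degrees_eq_twice_card_edges
    have d2 := Γ'.sum_degrees_eq_twice_card_edges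
    rw [Finset.sum_congr rfl (fun v _ => degree_eq_of_reg Γ hreg v),
      Finset.sum_const, smul_eq_mul, Finset.card_univ] at d1
    rw [Finset.sum_congr rfl (fun v _ => degree_eq_of_reg Γ' hreg' v),
      Finset.sum_const, smul_eq_mul, Finset.card_univ] at d2
    rw [SimpleGraph.edgeFinset, Set.toFinset_card] at d1 d2
    have h3 : 2 * Fintype.card Γ.edgeSet = 2 * Fintype.card Γ'.edgeSet := by
      rw [← d1, ← d2, hn]
    omega
  have key := master Γ hreg
  have key' := master Γ' hreg'
  rw [hcos, hm, hn] at key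
  have hfin : (Γ.lineGraph.adjMatrix ℤ).charpoly * (X + C 2) ^ (Fintype.card W)
      = (Γ'.lineGraph.adjMatrix ℤ).charpoly * (X + C 2) ^ (Fintype.card W) :=
    key.trans key'.symm
  exact mul_right_cancel₀ (pow_ne_zero _ (Polynomial.monic_X_add_C (2 : ℤ)).ne_zero) hfin

end Aux

/-- If `Γ` and `Γ'` are `k`-regular cospectral graphs, then their line
graphs are `(2k-2)`-regular and cospectral. -/
theorem stmt14 {V W : Type*} [Fintype V] [DecidableEq V] [Fintype W] [DecidableEq W]
    (k : ℕ) (Γ : SimpleGraph V) (Γ' : SimpleGraph W)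
    (hreg : IsRegularGraph Γ k) (hreg' : IsRegularGraph Γ' k)
    (hcos : Cospectral Γ Γ') :
    IsRegularGraph Γ.lineGraph (2 * k - 2) ∧ IsRegularGraph Γ'.lineGraph (2 * k - 2) ∧
      Cospectral Γ.lineGraph Γ'.lineGraph := by
  exact stmt14' k Γ Γ' hreg hreg' hcos
end
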